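/- arXiv:1006.5780 — 8 statements merged into one kernel-verified Lean document; each statement's English description precedes it below -/
import Mathlib

section
/- Let ε ∈ (0,1), let h ∈ W₂¹(0,L) satisfy h(x) ≥ √ε for all x ∈ [0,L], and let H ∈ W₂²(0,L) be the solution of H − ε² ∂ₓ²H = h on (0,L) with ∂ₓH(0) = ∂ₓH(L) = 0. Then: (i) ‖H‖_p ≤ ‖h‖_p for every p ∈ [1,∞]; (ii) H(x) ≥ √ε for all x ∈ [0,L]; (iii) ‖∂ₓH‖₂² + 2ε² ‖∂ₓ²H‖₂² ≤ ‖∂ₓh‖₂²; (iv) ε² ‖∂ₓH‖_∞ ≤ ‖h‖₁. -/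
/-!
The lower bound is a minimum principle: at a minimum point `x₀` of `H` on `[0,L]` one has
`H'(x₀) = 0` (Fermat inside, the Neumann condition at the ends), and if `H(x₀) < √ε ≤ h` then
`H'' = (H - h)/ε² < 0` near `x₀`, so `H` strictly decreases away from `x₀` on one side.
Applied to `±H` the same argument gives `|H| ≤ ‖h‖_∞`.

For finite `p`, testing the equation against `H^(p-1)` and integrating by parts gives
`∫ H^(p-1) (H - h) = -ε² (p-1) ∫ H^(p-2) H'² ≤ 0`, and the tangent-line inequality for the convex
function `t ↦ t^p` turns this into `∫ H^p ≤ ∫ h^p`. Testing against `H''` gives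
`ε² ∫ H''² = ∫ (h' - H') H'`, whence (iii) by `h' H' ≤ (h'² + H'²)/2`. Finally
`ε² H'(x) = ∫₀ˣ (H - h) = -∫ₓᴸ (H - h)`, which positivity of `H` and `h` bounds by `∫₀ᴸ h`
from both sides.
-/

open MeasureTheory Set
open scoped ENNReal

theorem Real.rpow_sub_rpow_le_mul_rpow_sub_one_mul {a b r : ℝ} (ha : 0 < a) (hb : 0 ≤ b)
    (hr : 1 ≤ r) : a ^ r - b ^ r ≤ r * (a ^ (r - 1) * (a - b)) := by
  have key := one_add_mul_self_le_rpow_one_add (s := b / a - 1)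
    (by linarith [div_nonneg hb ha.le]) hr
  rw [add_sub_cancel, Real.div_rpow hb ha.le, le_div_iff₀ (Real.rpow_pos_of_pos ha r)] at key
  have hsplit : a ^ (r - 1) * (a - b) = -(a ^ r * (b / a - 1)) := by
    rw [Real.rpow_sub_one ha.ne']
    field_simp
    ring
  rw [hsplit]
  linarith

theorem exists_lt_of_deriv_eq_zero_of_deriv_deriv_neg {f : ℝ → ℝ} {a b x₀ : ℝ} (hab : a < b)
    (hx₀ : x₀ ∈ Icc a b) (hf : ContinuousOn f (Icc a b)) (hf' : ContinuousOn (deriv f) (Icc a b))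
    (hd : deriv f x₀ = 0) (hneg : ∀ x ∈ Ioo a b, deriv (deriv f) x < 0) :
    ∃ y ∈ Icc a b, f y < f x₀ := by
  have hanti : StrictAntiOn (deriv f) (Icc a b) :=
    strictAntiOn_of_deriv_neg (convex_Icc a b) hf' (by rwa [interior_Icc])
  rcases hx₀.2.lt_or_eq with hlt | rfl
  · have : StrictAntiOn f (Icc x₀ b) := by
      refine strictAntiOn_of_deriv_neg (convex_Icc _ _) (hf.mono (Icc_subset_Icc_left hx₀.1))
        fun y hy => ?_
      rw [interior_Icc] at hy
      rw [← hd]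
      exact hanti hx₀ ⟨hx₀.1.trans hy.1.le, hy.2.le⟩ hy.1
    exact ⟨b, right_mem_Icc.2 hab.le, this (left_mem_Icc.2 hlt.le) (right_mem_Icc.2 hlt.le) hlt⟩
  · have : StrictMonoOn f (Icc a x₀) := by
      refine strictMonoOn_of_deriv_pos (convex_Icc _ _) (hf.mono (Icc_subset_Icc_right hx₀.2))
        fun y hy => ?_
      rw [interior_Icc] at hy
      rw [← hd]
      exact hanti ⟨hy.1.le, hy.2.le⟩ hx₀ hy.2
    exact ⟨a, left_mem_Icc.2 hab.le, this (left_mem_Icc.2 hab.le) (right_mem_Icc.2 hab.le) hab⟩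

theorem memLp_restrict_Ioo_of_continuousOn {f : ℝ → ℝ} {a b : ℝ} (hf : ContinuousOn f (Icc a b))
    (p : ℝ≥0∞) : MemLp f p (volume.restrict (Ioo a b)) := by
  obtain ⟨C, hC⟩ := isCompact_Icc.exists_bound_of_continuousOn hf
  exact MemLp.of_bound ((hf.mono Ioo_subset_Icc_self).aestronglyMeasurable measurableSet_Ioo) C
    ((ae_restrict_iff' measurableSet_Ioo).2 (ae_of_all _ fun x hx => hC x (Ioo_subset_Icc_self hx)))

theorem eLpNorm_restrict_Ioo_le_of_integral_rpow_le {f g : ℝ → ℝ} {a b : ℝ} {p : ℝ≥0∞}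
    (hab : a ≤ b) (hp0 : p ≠ 0) (hp : p ≠ ∞) (hf : ContinuousOn f (Icc a b))
    (hg : ContinuousOn g (Icc a b)) (hf0 : ∀ x ∈ Icc a b, 0 ≤ f x) (hg0 : ∀ x ∈ Icc a b, 0 ≤ g x)
    (hfg : ∫ x in a..b, f x ^ p.toReal ≤ ∫ x in a..b, g x ^ p.toReal) :
    eLpNorm f p (volume.restrict (Ioo a b)) ≤ eLpNorm g p (volume.restrict (Ioo a b)) := by
  have hnorm : ∀ u : ℝ → ℝ, (∀ x ∈ Icc a b, 0 ≤ u x) →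
      ∫ x in Ioo a b, ‖u x‖ ^ p.toReal = ∫ x in a..b, u x ^ p.toReal := fun u hu => by
    rw [intervalIntegral.integral_of_le hab, integral_Ioc_eq_integral_Ioo]
    refine setIntegral_congr_fun measurableSet_Ioo fun x hx => ?_
    rw [Real.norm_eq_abs, abs_of_nonneg (hu x (Ioo_subset_Icc_self hx))]
  rw [(memLp_restrict_Ioo_of_continuousOn hf p).eLpNorm_eq_integral_rpow_norm hp0 hp,
    (memLp_restrict_Ioo_of_continuousOn hg p).eLpNorm_eq_integral_rpow_norm hp0 hp,
    hnorm f hf0, hnorm g hg0]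
  gcongr
  exact intervalIntegral.integral_nonneg hab fun x hx => Real.rpow_nonneg (hf0 x hx) _

theorem abs_le_toReal_eLpNormEssSup {f : ℝ → ℝ} {a b : ℝ} (hf : ContinuousOn f (Ioo a b))
    (hfin : eLpNormEssSup f (volume.restrict (Ioo a b)) ≠ ∞) :
    ∀ x ∈ Ioo a b, |f x| ≤ (eLpNormEssSup f (volume.restrict (Ioo a b))).toReal := by
  set C := (eLpNormEssSup f (volume.restrict (Ioo a b))).toReal
  have hae : ∀ᵐ x ∂(volume.restrict (Ioo a b)), min |f x| C = |f x| := by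
    filter_upwards [ae_le_eLpNormEssSup (f := f)] with x hx
    rw [min_eq_left_iff, ← Real.norm_eq_abs, ← toReal_enorm]
    exact ENNReal.toReal_mono hfin hx
  intro x hx
  have hx' : min |f x| C = |f x| :=
    Measure.eqOn_Ioo_of_ae_eq volume hae (hf.abs.inf continuousOn_const) hf.abs hx
  exact hx' ▸ min_le_right _ _

structure IsNeumannResolvent (ε L : ℝ) (h H : ℝ → ℝ) : Prop where
  differentiableAt : ∀ x ∈ Icc 0 L, DifferentiableAt ℝ H x
  differentiableAt_deriv : ∀ x ∈ Icc 0 L, DifferentiableAt ℝ (deriv H) x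
  sub_eq : ∀ x ∈ Ioo 0 L, H x - ε ^ 2 * deriv (deriv H) x = h x
  deriv_left : deriv H 0 = 0
  deriv_right : deriv H L = 0

namespace IsNeumannResolvent

variable {ε L : ℝ} {h H : ℝ → ℝ}

theorem continuousOn (hH : IsNeumannResolvent ε L h H) : ContinuousOn H (Icc 0 L) :=
  fun x hx => (hH.differentiableAt x hx).continuousAt.continuousWithinAt

theorem continuousOn_deriv (hH : IsNeumannResolvent ε L h H) : ContinuousOn (deriv H) (Icc 0 L) :=
  fun x hx => (hH.differentiableAt_deriv x hx).continuousAt.continuousWithinAt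

theorem neg (hH : IsNeumannResolvent ε L h H) : IsNeumannResolvent ε L (-h) (-H) where
  differentiableAt x hx := (hH.differentiableAt x hx).neg
  differentiableAt_deriv x hx := by
    rw [deriv.neg']
    exact (hH.differentiableAt_deriv x hx).neg
  sub_eq x hx := by
    simp only [deriv.neg', deriv.fun_neg, Pi.neg_apply]
    linarith [hH.sub_eq x hx]
  deriv_left := by simp [deriv.neg', hH.deriv_left]
  deriv_right := by simp [deriv.neg', hH.deriv_right]

theorem le_apply (hH : IsNeumannResolvent ε L h H) (hL : 0 < L) {c : ℝ}
    (hc : ∀ x ∈ Ioo 0 L, c ≤ h x) : ∀ x ∈ Icc 0 L, c ≤ H x := by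
  obtain ⟨x₀, hx₀, hmin⟩ := isCompact_Icc.exists_isMinOn (nonempty_Icc.2 hL.le) hH.continuousOn
  intro x hx
  refine le_trans ?_ (hmin hx)
  by_contra! hlt
  have hd : deriv H x₀ = 0 := by
    rcases hx₀.1.eq_or_lt with rfl | h0
    · exact hH.deriv_left
    rcases hx₀.2.eq_or_lt with rfl | h1
    · exact hH.deriv_right
    exact (hmin.isLocalMin (Icc_mem_nhds h0 h1)).deriv_eq_zero
  obtain ⟨l, u, ⟨hl, hu⟩, hlu⟩ := mem_nhds_iff_exists_Ioo_subset.1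
    ((hH.differentiableAt x₀ hx₀).continuousAt.eventually_lt continuousAt_const hlt)
  have hsub : Icc (max 0 l) (min L u) ⊆ Icc 0 L :=
    Icc_subset_Icc (le_max_left _ _) (min_le_left _ _)
  have hneg : ∀ y ∈ Ioo (max 0 l) (min L u), deriv (deriv H) y < 0 := fun y hy => by
    have hy0 : y ∈ Ioo 0 L := ⟨(le_max_left _ _).trans_lt hy.1, hy.2.trans_le (min_le_left _ _)⟩
    have hHy : H y < c := hlu ⟨(le_max_right _ _).trans_lt hy.1, hy.2.trans_le (min_le_right _ _)⟩
    have : ε ^ 2 * deriv (deriv H) y < 0 := by linarith [hH.sub_eq y hy0, hc y hy0]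
    exact neg_of_mul_neg_right this (sq_nonneg ε)
  obtain ⟨y, hy, hHy⟩ := exists_lt_of_deriv_eq_zero_of_deriv_deriv_neg
    (max_lt (lt_min hL (hx₀.1.trans_lt hu)) (lt_min (hl.trans_le hx₀.2) (hl.trans hu)))
    ⟨max_le hx₀.1 hl.le, le_min hx₀.2 hu.le⟩ (hH.continuousOn.mono hsub)
    (hH.continuousOn_deriv.mono hsub) hd hneg
  exact (hmin (hsub hy)).not_gt hHy

theorem apply_le (hH : IsNeumannResolvent ε L h H) (hL : 0 < L) {C : ℝ}
    (hC : ∀ x ∈ Ioo 0 L, h x ≤ C) : ∀ x ∈ Icc 0 L, H x ≤ C := fun x hx =>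
  neg_le_neg_iff.1 (hH.neg.le_apply hL (fun y hy => neg_le_neg (hC y hy)) x hx)

theorem abs_apply_le (hH : IsNeumannResolvent ε L h H) (hL : 0 < L) {C : ℝ}
    (hC : ∀ x ∈ Ioo 0 L, |h x| ≤ C) : ∀ x ∈ Icc 0 L, |H x| ≤ C := fun x hx =>
  abs_le.2 ⟨hH.le_apply hL (fun y hy => (abs_le.1 (hC y hy)).1) x hx,
    hH.apply_le hL (fun y hy => (abs_le.1 (hC y hy)).2) x hx⟩

theorem eLpNormEssSup_le (hH : IsNeumannResolvent ε L h H) (hL : 0 < L)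
    (hh : ContinuousOn h (Ioo 0 L)) :
    eLpNormEssSup H (volume.restrict (Ioo 0 L)) ≤ eLpNormEssSup h (volume.restrict (Ioo 0 L)) := by
  rcases eq_or_ne (eLpNormEssSup h (volume.restrict (Ioo 0 L))) ∞ with htop | hfin
  · exact htop ▸ le_top
  rw [← ENNReal.ofReal_toReal hfin]
  refine eLpNormEssSup_le_of_ae_bound ((ae_restrict_iff' measurableSet_Ioo).2 (ae_of_all _ ?_))
  intro x hx
  exact hH.abs_apply_le hL (abs_le_toReal_eLpNormEssSup hh hfin) x (Ioo_subset_Icc_self hx)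

theorem deriv_deriv_eqOn (hH : IsNeumannResolvent ε L h H) (hε : ε ≠ 0) :
    EqOn (deriv (deriv H)) (fun x => (H x - h x) / ε ^ 2) (Ioo 0 L) := fun x hx => by
  rw [eq_div_iff (pow_ne_zero 2 hε), ← hH.sub_eq x hx]
  ring

theorem integral_sub_eq (hH : IsNeumannResolvent ε L h H) (hh : ContinuousOn h (Icc 0 L))
    {a b : ℝ} (ha : 0 ≤ a) (hab : a ≤ b) (hb : b ≤ L) :
    ∫ x in a..b, (H x - h x) = ε ^ 2 * (deriv H b - deriv H a) := by
  have hsub : Icc a b ⊆ Icc 0 L := Icc_subset_Icc ha hb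
  rw [mul_sub, intervalIntegral.integral_eq_sub_of_hasDerivAt_of_le
    (f := fun x => ε ^ 2 * deriv H x) (f' := fun x => H x - h x) hab
    (continuousOn_const.mul (hH.continuousOn_deriv.mono hsub)) (fun x hx => ?_)
    (((hH.continuousOn.sub hh).mono hsub).intervalIntegrable_of_Icc hab)]
  have hx' : x ∈ Ioo 0 L := ⟨ha.trans_lt hx.1, hx.2.trans_le hb⟩
  exact ((hH.differentiableAt_deriv x (Ioo_subset_Icc_self hx')).hasDerivAt.const_mul
    (ε ^ 2)).congr_deriv (by linarith [hH.sub_eq x hx'])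

theorem integral_mul_deriv_deriv (hH : IsNeumannResolvent ε L h H) (hε : ε ≠ 0) (hL : 0 ≤ L)
    (hh : ContinuousOn h (Icc 0 L)) {u u' : ℝ → ℝ} (hu : ContinuousOn u (Icc 0 L))
    (huu' : ∀ x ∈ Ioo 0 L, HasDerivAt u (u' x) x) (hu' : IntervalIntegrable u' volume 0 L) :
    ∫ x in 0..L, u x * deriv (deriv H) x = -∫ x in 0..L, u' x * deriv H x := by
  have hsrc := hH.deriv_deriv_eqOn hε
  rw [intervalIntegral.integral_congr_Ioo_of_le (g := fun x => u x * ((H x - h x) / ε ^ 2)) hL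
      (fun x hx => by rw [hsrc hx]),
    intervalIntegral.integral_mul_deriv_eq_deriv_mul_of_hasDerivAt (u' := u') (v := deriv H)
      (v' := fun x => (H x - h x) / ε ^ 2)
      (by rwa [uIcc_of_le hL]) (by rw [uIcc_of_le hL]; exact hH.continuousOn_deriv) ?_ ?_ hu'
      (((hH.continuousOn.sub hh).div_const _).intervalIntegrable_of_Icc hL),
    hH.deriv_left, hH.deriv_right]
  · simp
  all_goals rw [min_eq_left hL, max_eq_right hL]
  · exact huu'
  · exact fun x hx => (hH.differentiableAt_deriv x (Ioo_subset_Icc_self hx)).hasDerivAt.congr_deriv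
      (hsrc hx)

theorem integral_rpow_le (hH : IsNeumannResolvent ε L h H) (hε : ε ≠ 0) (hL : 0 ≤ L)
    (hh : ContinuousOn h (Icc 0 L)) (hh0 : ∀ x ∈ Icc 0 L, 0 ≤ h x)
    (hH0 : ∀ x ∈ Icc 0 L, 0 < H x) {r : ℝ} (hr : 1 ≤ r) :
    ∫ x in 0..L, H x ^ r ≤ ∫ x in 0..L, h x ^ r := by
  have hr0 : 0 < r := one_pos.trans_le hr
  have hcont : ∀ s : ℝ, ContinuousOn (fun x => H x ^ s) (Icc 0 L) := fun s =>
    hH.continuousOn.rpow_const (p := s) fun x hx => Or.inl (hH0 x hx).ne'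
  have hcont_h : ContinuousOn (fun x => h x ^ r) (Icc 0 L) :=
    hh.rpow_const fun _ _ => Or.inr hr0.le
  have hibp := hH.integral_mul_deriv_deriv hε hL hh (hcont (r - 1))
    (fun x hx => ((hH.differentiableAt x (Ioo_subset_Icc_self hx)).hasDerivAt.rpow_const
      (Or.inl (hH0 x (Ioo_subset_Icc_self hx)).ne')))
    (((hH.continuousOn_deriv.mul continuousOn_const).mul
      (hcont (r - 1 - 1))).intervalIntegrable_of_Icc hL)
  have htest : ∫ x in 0..L, H x ^ (r - 1) * (H x - h x) ≤ 0 := by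
    calc ∫ x in 0..L, H x ^ (r - 1) * (H x - h x)
        = ε ^ 2 * ∫ x in 0..L, H x ^ (r - 1) * deriv (deriv H) x := by
          rw [← intervalIntegral.integral_const_mul]
          refine intervalIntegral.integral_congr_Ioo_of_le hL fun x hx => ?_
          simp only [← hH.sub_eq x hx]
          ring
      _ ≤ 0 := by
          rw [hibp]
          refine mul_nonpos_of_nonneg_of_nonpos (sq_nonneg ε) (neg_nonpos.2 ?_)
          refine intervalIntegral.integral_nonneg hL fun x hx => ?_
          rw [show deriv H x * (r - 1) * H x ^ (r - 1 - 1) * deriv H x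
              = (r - 1) * H x ^ (r - 1 - 1) * deriv H x ^ 2 by ring]
          exact mul_nonneg (mul_nonneg (by linarith) (Real.rpow_nonneg (hH0 x hx).le _))
            (sq_nonneg _)
  have htangent :
      ∫ x in 0..L, (H x ^ r - h x ^ r) / r ≤ ∫ x in 0..L, H x ^ (r - 1) * (H x - h x) :=
    intervalIntegral.integral_mono_on hL
      (((hcont r).sub hcont_h).div_const r |>.intervalIntegrable_of_Icc hL)
      (((hcont (r - 1)).mul (hH.continuousOn.sub hh)).intervalIntegrable_of_Icc hL)
      fun x hx => by
        rw [div_le_iff₀' hr0]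
        exact Real.rpow_sub_rpow_le_mul_rpow_sub_one_mul (hH0 x hx) (hh0 x hx) hr
  rw [intervalIntegral.integral_div, intervalIntegral.integral_sub
    ((hcont r).intervalIntegrable_of_Icc hL) (hcont_h.intervalIntegrable_of_Icc hL)] at htangent
  linarith [(div_le_iff₀ hr0).1 (htangent.trans htest)]

theorem integral_deriv_sq_add_le (hH : IsNeumannResolvent ε L h H) (hε : ε ≠ 0) (hL : 0 ≤ L)
    (hh : ∀ x ∈ Icc 0 L, DifferentiableAt ℝ h x)
    (hh' : MemLp (deriv h) 2 (volume.restrict (Ioo 0 L))) :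
    (∫ x in 0..L, deriv H x ^ 2) + 2 * ε ^ 2 * ∫ x in 0..L, deriv (deriv H) x ^ 2
      ≤ ∫ x in 0..L, deriv h x ^ 2 := by
  have hhc : ContinuousOn h (Icc 0 L) := fun x hx => (hh x hx).continuousAt.continuousWithinAt
  have hint : ∀ {f : ℝ → ℝ}, Integrable f (volume.restrict (Ioo 0 L)) →
      IntervalIntegrable f volume 0 L := fun hf =>
    (intervalIntegrable_iff_integrableOn_Ioo_of_le hL).2 hf
  have hh'1 := hint (hh'.integrable one_le_two)
  have hh'2 := hint hh'.integrable_sq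
  have hH'2 : IntervalIntegrable (fun x => deriv H x ^ 2) volume 0 L :=
    (hH.continuousOn_deriv.pow 2).intervalIntegrable_of_Icc hL
  have hcross : IntervalIntegrable (fun x => (deriv h x - deriv H x) * deriv H x) volume 0 L :=
    (hh'1.sub (hH.continuousOn_deriv.intervalIntegrable_of_Icc hL)).mul_continuousOn
      (by rw [uIcc_of_le hL]; exact hH.continuousOn_deriv)
  have henergy : ε ^ 2 * ∫ x in 0..L, deriv (deriv H) x ^ 2
      ≤ (∫ x in 0..L, deriv h x ^ 2) / 2 - (∫ x in 0..L, deriv H x ^ 2) / 2 := by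
    calc ε ^ 2 * ∫ x in 0..L, deriv (deriv H) x ^ 2
        = ∫ x in 0..L, (H x - h x) * deriv (deriv H) x := by
          rw [← intervalIntegral.integral_const_mul]
          refine intervalIntegral.integral_congr_Ioo_of_le hL fun x hx => ?_
          simp only [← hH.sub_eq x hx]
          ring
      _ = ∫ x in 0..L, (deriv h x - deriv H x) * deriv H x := by
          rw [hH.integral_mul_deriv_deriv (u := fun x => H x - h x) hε hL hhc
              (hH.continuousOn.sub hhc)
            (fun x hx => ((hH.differentiableAt x (Ioo_subset_Icc_self hx)).hasDerivAt.sub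
              (hh x (Ioo_subset_Icc_self hx)).hasDerivAt))
            ((hH.continuousOn_deriv.intervalIntegrable_of_Icc hL).sub hh'1),
            ← intervalIntegral.integral_neg]
          congr 1 with x
          ring
      _ ≤ ∫ x in 0..L, (deriv h x ^ 2 / 2 - deriv H x ^ 2 / 2) :=
          intervalIntegral.integral_mono_on hL hcross ((hh'2.div_const 2).sub (hH'2.div_const 2))
            fun x _ => by nlinarith [sq_nonneg (deriv h x - deriv H x)]
      _ = _ := by
          rw [intervalIntegral.integral_sub (hh'2.div_const 2) (hH'2.div_const 2),
            intervalIntegral.integral_div, intervalIntegral.integral_div]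
  linarith

theorem sq_mul_abs_deriv_le (hH : IsNeumannResolvent ε L h H) (hh : ContinuousOn h (Icc 0 L))
    (hh0 : ∀ x ∈ Icc 0 L, 0 ≤ h x) (hH0 : ∀ x ∈ Icc 0 L, 0 ≤ H x) {x : ℝ} (hx : x ∈ Icc 0 L) :
    ε ^ 2 * |deriv H x| ≤ ∫ y in 0..L, h y := by
  have hL : 0 ≤ L := hx.1.trans hx.2
  have hint : ∀ {f : ℝ → ℝ}, ContinuousOn f (Icc 0 L) → ∀ {a b : ℝ}, a ∈ Icc 0 L → b ∈ Icc 0 L →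
      IntervalIntegrable f volume a b := fun hf _ _ ha hb =>
    (hf.mono (uIcc_subset_Icc ha hb)).intervalIntegrable
  have h0 : (0 : ℝ) ∈ Icc 0 L := left_mem_Icc.2 hL
  have hL' : L ∈ Icc 0 L := right_mem_Icc.2 hL
  have hh_nonneg : 0 ≤ᵐ[volume.restrict (Ioc 0 L)] h :=
    (ae_restrict_iff' measurableSet_Ioc).2 (ae_of_all _ fun y hy => hh0 y (Ioc_subset_Icc_self hy))
  have hleft := hH.integral_sub_eq hh le_rfl hx.1 hx.2
  have hright := hH.integral_sub_eq hh hx.1 hx.2 le_rfl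
  rw [hH.deriv_left, sub_zero] at hleft
  rw [hH.deriv_right, zero_sub] at hright
  rw [← abs_of_nonneg (sq_nonneg ε), ← abs_mul, abs_le]
  constructor
  · calc -∫ y in 0..L, h y ≤ -∫ y in 0..x, h y :=
          neg_le_neg (intervalIntegral.integral_mono_interval le_rfl hx.1 hx.2 hh_nonneg
            (hint hh h0 hL'))
      _ ≤ ∫ y in 0..x, (H y - h y) := by
          rw [← intervalIntegral.integral_neg]
          exact intervalIntegral.integral_mono_on hx.1 (hint hh.neg h0 hx)
            (hint (hH.continuousOn.sub hh) h0 hx)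
            fun y hy => by linarith [hH0 y ⟨hy.1, hy.2.trans hx.2⟩]
      _ = ε ^ 2 * deriv H x := hleft
  · calc ε ^ 2 * deriv H x = ∫ y in x..L, (h y - H y) := by
          simp only [← neg_sub (H _), intervalIntegral.integral_neg, hright]
          ring
      _ ≤ ∫ y in x..L, h y :=
          intervalIntegral.integral_mono_on hx.2 (hint (hh.sub hH.continuousOn) hx hL')
            (hint hh hx hL') fun y hy => by linarith [hH0 y ⟨hx.1.trans hy.1, hy.2⟩]
      _ ≤ ∫ y in 0..L, h y :=
          intervalIntegral.integral_mono_interval hx.1 hx.2 le_rfl hh_nonneg (hint hh h0 hL')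

theorem sq_mul_sSup_abs_deriv_le (hH : IsNeumannResolvent ε L h H) (hε : ε ≠ 0) (hL : 0 ≤ L)
    (hh : ContinuousOn h (Icc 0 L)) (hh0 : ∀ x ∈ Icc 0 L, 0 ≤ h x)
    (hH0 : ∀ x ∈ Icc 0 L, 0 ≤ H x) :
    ε ^ 2 * sSup ((fun x => |deriv H x|) '' Icc 0 L) ≤ ∫ x in 0..L, |h x| := by
  have hε2 : 0 < ε ^ 2 := by positivity
  rw [intervalIntegral.integral_congr
      fun x hx => abs_of_nonneg (hh0 x (by rwa [uIcc_of_le hL] at hx)),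
    ← le_div_iff₀' hε2]
  refine Real.sSup_le ?_ (div_nonneg (intervalIntegral.integral_nonneg hL hh0) hε2.le)
  rintro _ ⟨x, hx, rfl⟩
  rw [le_div_iff₀' hε2]
  exact hH.sq_mul_abs_deriv_le hh hh0 hH0 hx

end IsNeumannResolvent

theorem resolvent_properties_general
    (L ε : ℝ) (hL : 0 < L) (hε : ε ∈ Ioo (0:ℝ) 1)
    (h H : ℝ → ℝ)
    -- `h ∈ W₂¹(0,L)` with `h ≥ √ε`
    (hreg : ∀ x ∈ Icc (0:ℝ) L, DifferentiableAt ℝ h x)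
    (hL2' : MemLp (deriv h) 2 (volume.restrict (Ioo 0 L)))
    (hlb : ∀ x ∈ Icc (0:ℝ) L, Real.sqrt ε ≤ h x)
    -- `H ∈ W₂²(0,L)` solves `H − ε²∂ₓ²H = h` with Neumann boundary conditions
    (hHreg : ∀ x ∈ Icc (0:ℝ) L, DifferentiableAt ℝ H x ∧ DifferentiableAt ℝ (deriv H) x)
    (hHeq : ∀ x ∈ Ioo (0:ℝ) L, H x - ε ^ 2 * deriv (deriv H) x = h x)
    (hHbc : deriv H 0 = 0 ∧ deriv H L = 0) :
    -- (i) contraction in every `L_p`, `1 ≤ p ≤ ∞`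
    (∀ p : ENNReal, 1 ≤ p →
      eLpNorm H p (volume.restrict (Ioo 0 L)) ≤ eLpNorm h p (volume.restrict (Ioo 0 L))) ∧
    -- (ii) lower bound
    (∀ x ∈ Icc (0:ℝ) L, Real.sqrt ε ≤ H x) ∧
    -- (iii) gradient estimate
    ((∫ x in (0:ℝ)..L, (deriv H x) ^ 2) + 2 * ε ^ 2 * ∫ x in (0:ℝ)..L, (deriv (deriv H) x) ^ 2)
      ≤ (∫ x in (0:ℝ)..L, (deriv h x) ^ 2) ∧
    -- (iv) uniform gradient bound
    ε ^ 2 * sSup ((fun x => |deriv H x|) '' Icc (0:ℝ) L) ≤ ∫ x in (0:ℝ)..L, |h x| := by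
  have hε0 : ε ≠ 0 := hε.1.ne'
  have hR : IsNeumannResolvent ε L h H :=
    ⟨fun x hx => (hHreg x hx).1, fun x hx => (hHreg x hx).2, hHeq, hHbc.1, hHbc.2⟩
  have hhc : ContinuousOn h (Icc 0 L) := fun x hx => (hreg x hx).continuousAt.continuousWithinAt
  have hHlb := hR.le_apply hL fun x hx => hlb x (Ioo_subset_Icc_self hx)
  have hsqrt : 0 < Real.sqrt ε := Real.sqrt_pos.2 hε.1
  have hh0 : ∀ x ∈ Icc 0 L, 0 ≤ h x := fun x hx => hsqrt.le.trans (hlb x hx)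
  have hH0 : ∀ x ∈ Icc 0 L, 0 < H x := fun x hx => hsqrt.trans_le (hHlb x hx)
  refine ⟨fun p hp => ?_, hHlb, hR.integral_deriv_sq_add_le hε0 hL.le hreg hL2',
    hR.sq_mul_sSup_abs_deriv_le hε0 hL.le hhc hh0 fun x hx => (hH0 x hx).le⟩
  rcases eq_or_ne p ∞ with rfl | hp_top
  · simpa only [eLpNorm_exponent_top] using hR.eLpNormEssSup_le hL (hhc.mono Ioo_subset_Icc_self)
  · exact eLpNorm_restrict_Ioo_le_of_integral_rpow_le hL.le (zero_lt_one.trans_le hp).ne' hp_top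
      hR.continuousOn hhc (fun x hx => (hH0 x hx).le) hh0
      (hR.integral_rpow_le hε0 hL.le hhc hh0 hH0
        (ENNReal.toReal_one ▸ ENNReal.toReal_mono hp_top hp))

/-- Properties of the Neumann resolvent `H = (1 - ε²∂ₓ²)⁻¹ h`:
(i) `‖H‖_p ≤ ‖h‖_p` for all `p ∈ [1,∞]`; (ii) `H ≥ √ε`;
(iii) `‖∂ₓH‖₂² + 2ε²‖∂ₓ²H‖₂² ≤ ‖∂ₓh‖₂²`; (iv) `ε²‖∂ₓH‖_∞ ≤ ‖h‖₁`. -/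
theorem resolvent_properties
    (L ε : ℝ) (hL : 0 < L) (hε : ε ∈ Ioo (0:ℝ) 1)
    (h H : ℝ → ℝ)
    -- `h ∈ W₂¹(0,L)` with `h ≥ √ε`
    (hreg : ∀ x ∈ Icc (0:ℝ) L, DifferentiableAt ℝ h x)
    (hL2 : MemLp h 2 (volume.restrict (Ioo 0 L)))
    (hL2' : MemLp (deriv h) 2 (volume.restrict (Ioo 0 L)))
    (hlb : ∀ x ∈ Icc (0:ℝ) L, Real.sqrt ε ≤ h x)
    -- `H ∈ W₂²(0,L)` solves `H − ε²∂ₓ²H = h` with Neumann boundary conditions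
    (hHreg : ∀ x ∈ Icc (0:ℝ) L, DifferentiableAt ℝ H x ∧ DifferentiableAt ℝ (deriv H) x)
    (hHL2 : MemLp (deriv (deriv H)) 2 (volume.restrict (Ioo 0 L)))
    (hHeq : ∀ x ∈ Ioo (0:ℝ) L, H x - ε ^ 2 * deriv (deriv H) x = h x)
    (hHbc : deriv H 0 = 0 ∧ deriv H L = 0) :
    -- (i) contraction in every `L_p`, `1 ≤ p ≤ ∞`
    (∀ p : ENNReal, 1 ≤ p →
      eLpNorm H p (volume.restrict (Ioo 0 L)) ≤ eLpNorm h p (volume.restrict (Ioo 0 L))) ∧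
    -- (ii) lower bound
    (∀ x ∈ Icc (0:ℝ) L, Real.sqrt ε ≤ H x) ∧
    -- (iii) gradient estimate
    ((∫ x in (0:ℝ)..L, (deriv H x) ^ 2) + 2 * ε ^ 2 * ∫ x in (0:ℝ)..L, (deriv (deriv H) x) ^ 2)
      ≤ (∫ x in (0:ℝ)..L, (deriv h x) ^ 2) ∧
    -- (iv) uniform gradient bound
    ε ^ 2 * sSup ((fun x => |deriv H x|) '' Icc (0:ℝ) L) ≤ ∫ x in (0:ℝ)..L, |h x| :=
  resolvent_properties_general L ε hL hε h H hreg hL2' hlb hHreg hHeq hHbc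
end

section
/- Let ε ∈ (0,1), let H ∈ C¹([0,L]) satisfy H(x) ≥ √ε for all x ∈ [0,L], let σ ∈ C¹([0,∞)) and let Γ ∈ W₂¹(0,L) be nonnegative. Let Σ ∈ W₂²(0,L) be the solution of Σ − ε² ∂ₓ(H ∂ₓΣ) = σ(Γ) on (0,L) with ∂ₓΣ(0) = ∂ₓΣ(L) = 0. Then ‖√H ∂ₓΣ‖₂² + 2ε² ‖∂ₓ(H ∂ₓΣ)‖₂² ≤ ‖√H ∂ₓσ(Γ)‖₂², and moreover ‖Σ‖₁ ≤ ‖σ(Γ)‖₁ and ε² ‖H ∂ₓΣ‖_∞ ≤ 2 ‖σ(Γ)‖₁. -/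
open MeasureTheory Set

/-!
Write `F = H ∂ₓΣ`, so that `Σ - ε² ∂ₓF = σ(Γ)` on `(0, L)` and `F` vanishes at both ends.
Testing the equation against `∂ₓF` and integrating by parts gives
`∫ H (∂ₓΣ)² + ε² ∫ (∂ₓF)² = ∫ F ∂ₓσ(Γ)`, and Young's inequality
`F ∂ₓσ(Γ) ≤ (H (∂ₓσ(Γ))² + H (∂ₓΣ)²) / 2` gives the energy estimate.
Testing against `ψ_δ(Σ)`, with `ψ_δ(s) = s / √(s² + δ²)` a smooth increasing approximation of
`sign`, the flux term becomes `-ε² ∫ ψ_δ'(Σ) H (∂ₓΣ)² ≤ 0`, so `∫ Σ ψ_δ(Σ) ≤ ‖σ(Γ)‖₁`, and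
`δ → 0` gives the `L¹` bound. Finally `ε² F(x) = ∫₀ˣ (Σ - σ(Γ))`, which is at most
`‖Σ‖₁ + ‖σ(Γ)‖₁ ≤ 2 ‖σ(Γ)‖₁` in absolute value.
-/

noncomputable def smoothSign (δ s : ℝ) : ℝ := s / √(s ^ 2 + δ ^ 2)

noncomputable def smoothSignDeriv (δ s : ℝ) : ℝ := δ ^ 2 / ((s ^ 2 + δ ^ 2) * √(s ^ 2 + δ ^ 2))

section SmoothSign

variable {δ : ℝ}

theorem hasDerivAt_smoothSign (hδ : δ ≠ 0) (s : ℝ) :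
    HasDerivAt (smoothSign δ) (smoothSignDeriv δ s) s := by
  have hpos : 0 < s ^ 2 + δ ^ 2 := by positivity
  have hsqrt : HasDerivAt (fun t => √(t ^ 2 + δ ^ 2)) (2 * s / (2 * √(s ^ 2 + δ ^ 2))) s := by
    simpa using ((hasDerivAt_pow 2 s).add_const (δ ^ 2)).sqrt hpos.ne'
  have hsq : √(s ^ 2 + δ ^ 2) ^ 2 = s ^ 2 + δ ^ 2 := Real.sq_sqrt hpos.le
  refine ((hasDerivAt_id' s).div hsqrt (Real.sqrt_pos.2 hpos).ne').congr_deriv ?_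
  rw [smoothSignDeriv]
  field_simp
  linear_combination (s ^ 2 + δ ^ 2 - δ ^ 2) * hsq

theorem continuous_smoothSign (hδ : δ ≠ 0) : Continuous (smoothSign δ) :=
  continuous_iff_continuousAt.2 fun s => (hasDerivAt_smoothSign hδ s).continuousAt

theorem continuous_smoothSignDeriv (hδ : δ ≠ 0) : Continuous (smoothSignDeriv δ) := by
  unfold smoothSignDeriv
  refine continuous_const.div (by fun_prop) fun s => ?_
  have hpos : 0 < s ^ 2 + δ ^ 2 := by positivity
  exact (mul_pos hpos (Real.sqrt_pos.2 hpos)).ne'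

theorem smoothSignDeriv_nonneg (δ s : ℝ) : 0 ≤ smoothSignDeriv δ s := by
  unfold smoothSignDeriv; positivity

theorem abs_smoothSign_le_one (δ s : ℝ) : |smoothSign δ s| ≤ 1 := by
  rw [smoothSign, abs_div, abs_of_nonneg (Real.sqrt_nonneg _)]
  refine div_le_one_of_le₀ ?_ (Real.sqrt_nonneg _)
  rw [← Real.sqrt_sq_eq_abs]
  exact Real.sqrt_le_sqrt (by nlinarith)

theorem abs_le_mul_smoothSign_add (hδ : 0 < δ) (s : ℝ) : |s| ≤ s * smoothSign δ s + δ := by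
  have hsqrt : 0 < √(s ^ 2 + δ ^ 2) := Real.sqrt_pos.2 (by positivity)
  have hupper : √(s ^ 2 + δ ^ 2) ≤ |s| + δ := by
    rw [Real.sqrt_le_left (by positivity)]
    nlinarith [abs_nonneg s, sq_abs s]
  have hlower : |s| ≤ √(s ^ 2 + δ ^ 2) := by
    rw [← Real.sqrt_sq_eq_abs]
    exact Real.sqrt_le_sqrt (by nlinarith)
  rw [smoothSign, mul_div_assoc', ← sq, div_add' _ _ _ hsqrt.ne', le_div_iff₀ hsqrt]
  nlinarith [mul_le_mul_of_nonneg_left hupper (abs_nonneg s),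
    mul_le_mul_of_nonneg_left hlower hδ.le, sq_abs s]

end SmoothSign

theorem integral_deriv_mul_eq_neg_integral_mul_deriv_of_eq_zero {a b : ℝ} {F F' v v' : ℝ → ℝ}
    (hF : ∀ x ∈ uIcc a b, HasDerivAt F (F' x) x) (hv : ∀ x ∈ uIcc a b, HasDerivAt v (v' x) x)
    (hF' : IntervalIntegrable F' volume a b) (hv' : IntervalIntegrable v' volume a b)
    (ha : F a = 0) (hb : F b = 0) :
    ∫ x in a..b, F' x * v x = -∫ x in a..b, F x * v' x := by
  rw [intervalIntegral.integral_mul_deriv_eq_deriv_mul hF hv hF' hv', ha, hb]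
  ring

theorem intervalIntegrable_and_sq_of_memLp_two {f : ℝ → ℝ} {a b : ℝ} (hab : a ≤ b)
    (hf : MemLp f 2 (volume.restrict (Ioo a b))) :
    IntervalIntegrable f volume a b ∧ IntervalIntegrable (fun x => f x ^ 2) volume a b := by
  rw [intervalIntegrable_iff_integrableOn_Ioo_of_le hab (by simp) (by simp),
    intervalIntegrable_iff_integrableOn_Ioo_of_le hab (by simp) (by simp)]
  exact ⟨hf.integrable one_le_two, hf.integrable_sq⟩

theorem ContinuousOn.of_mul_left_of_ne_zero {α : Type*} [TopologicalSpace α] {s : Set α}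
    {h f : α → ℝ} (hh : ContinuousOn h s) (hh0 : ∀ x ∈ s, h x ≠ 0)
    (hhf : ContinuousOn (fun x => h x * f x) s) : ContinuousOn f s :=
  (hhf.div hh hh0).congr fun x hx => (mul_div_cancel_left₀ _ (hh0 x hx)).symm

section FluxEquation

variable {a b c : ℝ} {S F g : ℝ → ℝ}

theorem integral_mul_sq_deriv_add_le_of_flux {H g' : ℝ → ℝ} (hab : a ≤ b)
    (hH : ContinuousOn H (Icc a b)) (hH0 : ∀ x ∈ Icc a b, 0 ≤ H x)
    (hS : ∀ x ∈ Icc a b, DifferentiableAt ℝ S x) (hS' : ContinuousOn (deriv S) (Icc a b))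
    (hFH : ∀ x ∈ Icc a b, F x = H x * deriv S x)
    (hF : ∀ x ∈ Icc a b, DifferentiableAt ℝ F x) (hF' : IntervalIntegrable (deriv F) volume a b)
    (hF'sq : IntervalIntegrable (fun x => deriv F x ^ 2) volume a b)
    (hFa : F a = 0) (hFb : F b = 0)
    (hg : ∀ x ∈ Icc a b, HasDerivAt g (g' x) x) (hg' : IntervalIntegrable g' volume a b)
    (hHg' : IntervalIntegrable (fun x => H x * g' x ^ 2) volume a b)
    (heq : ∀ x ∈ Ioo a b, S x - c * deriv F x = g x) :
    (∫ x in a..b, H x * deriv S x ^ 2) + 2 * c * ∫ x in a..b, deriv F x ^ 2 ≤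
      ∫ x in a..b, H x * g' x ^ 2 := by
  have hI : uIcc a b = Icc a b := uIcc_of_le hab
  have hSc : ContinuousOn S (uIcc a b) :=
    fun x hx => (hS x (hI ▸ hx)).continuousAt.continuousWithinAt
  have hFc : ContinuousOn F (uIcc a b) :=
    fun x hx => (hF x (hI ▸ hx)).continuousAt.continuousWithinAt
  have hHS' : IntervalIntegrable (fun x => H x * deriv S x ^ 2) volume a b :=
    (hI ▸ hH.mul (hS'.pow 2)).intervalIntegrable
  have hpartsS : ∫ x in a..b, deriv F x * S x = -∫ x in a..b, H x * deriv S x ^ 2 := by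
    rw [integral_deriv_mul_eq_neg_integral_mul_deriv_of_eq_zero
      (fun x hx => (hF x (hI ▸ hx)).hasDerivAt) (fun x hx => (hS x (hI ▸ hx)).hasDerivAt)
      hF' (hI ▸ hS').intervalIntegrable hFa hFb]
    refine congrArg Neg.neg (intervalIntegral.integral_congr fun x hx => ?_)
    simp only [hFH x (hI ▸ hx)]
    ring
  have hpartsg : ∫ x in a..b, deriv F x * g x = -∫ x in a..b, F x * g' x :=
    integral_deriv_mul_eq_neg_integral_mul_deriv_of_eq_zero
      (fun x hx => (hF x (hI ▸ hx)).hasDerivAt) (fun x hx => hg x (hI ▸ hx)) hF' hg' hFa hFb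
  have htest : (∫ x in a..b, deriv F x * S x) - c * ∫ x in a..b, deriv F x ^ 2 =
      ∫ x in a..b, deriv F x * g x := by
    rw [← intervalIntegral.integral_const_mul, ← intervalIntegral.integral_sub
      (hF'.mul_continuousOn hSc) (hF'sq.const_mul c)]
    refine intervalIntegral.integral_congr_Ioo_of_le hab fun x hx => ?_
    simp only [← heq x hx]
    ring
  have hYoung : ∫ x in a..b, F x * g' x ≤
      (∫ x in a..b, H x * g' x ^ 2) / 2 + (∫ x in a..b, H x * deriv S x ^ 2) / 2 := by
    rw [← intervalIntegral.integral_div, ← intervalIntegral.integral_div,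
      ← intervalIntegral.integral_add (hHg'.div_const 2) (hHS'.div_const 2)]
    refine intervalIntegral.integral_mono_on hab (hg'.continuousOn_mul hFc)
      ((hHg'.div_const 2).add (hHS'.div_const 2)) fun x hx => ?_
    rw [hFH x hx]
    nlinarith [mul_nonneg (hH0 x hx) (sq_nonneg (g' x - deriv S x))]
  linarith

theorem integral_abs_le_integral_abs_add_of_flux {δ : ℝ} (hδ : 0 < δ) (hab : a ≤ b) (hc : 0 ≤ c)
    (hS : ∀ x ∈ Icc a b, DifferentiableAt ℝ S x) (hS' : ContinuousOn (deriv S) (Icc a b))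
    (hF : ∀ x ∈ Icc a b, DifferentiableAt ℝ F x) (hF' : IntervalIntegrable (deriv F) volume a b)
    (hFa : F a = 0) (hFb : F b = 0) (hFS : ∀ x ∈ Icc a b, 0 ≤ F x * deriv S x)
    (hg : IntervalIntegrable g volume a b) (heq : ∀ x ∈ Ioo a b, S x - c * deriv F x = g x) :
    ∫ x in a..b, |S x| ≤ (∫ x in a..b, |g x|) + δ * (b - a) := by
  have hI : uIcc a b = Icc a b := uIcc_of_le hab
  have hSc : ContinuousOn S (Icc a b) := fun x hx => (hS x hx).continuousAt.continuousWithinAt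
  have hψS : ContinuousOn (fun x => smoothSign δ (S x)) (uIcc a b) :=
    hI ▸ (continuous_smoothSign hδ.ne').comp_continuousOn hSc
  have hψS' : ContinuousOn (fun x => smoothSignDeriv δ (S x) * deriv S x) (uIcc a b) :=
    hI ▸ ((continuous_smoothSignDeriv hδ.ne').comp_continuousOn hSc).mul hS'
  have hSψS : IntervalIntegrable (fun x => S x * smoothSign δ (S x)) volume a b :=
    ((hI ▸ hSc).mul hψS).intervalIntegrable
  -- the flux term is dissipative because `F ∂ₓS ≥ 0` and the smoothed sign is increasing
  have hflux : ∫ x in a..b, deriv F x * smoothSign δ (S x) ≤ 0 := by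
    rw [integral_deriv_mul_eq_neg_integral_mul_deriv_of_eq_zero (v := fun x => smoothSign δ (S x))
      (fun x hx => (hF x (hI ▸ hx)).hasDerivAt)
      (fun x hx => (hasDerivAt_smoothSign hδ.ne' (S x)).comp x (hS x (hI ▸ hx)).hasDerivAt)
      hF' hψS'.intervalIntegrable hFa hFb, neg_nonpos]
    refine intervalIntegral.integral_nonneg hab fun x hx => ?_
    rw [mul_left_comm]
    exact mul_nonneg (smoothSignDeriv_nonneg δ (S x)) (hFS x hx)
  have htest : ∫ x in a..b, S x * smoothSign δ (S x) =
      (∫ x in a..b, g x * smoothSign δ (S x)) +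
        c * ∫ x in a..b, deriv F x * smoothSign δ (S x) := by
    rw [← intervalIntegral.integral_const_mul, ← intervalIntegral.integral_add
      (hg.mul_continuousOn hψS) ((hF'.mul_continuousOn hψS).const_mul c)]
    refine intervalIntegral.integral_congr_Ioo_of_le hab fun x hx => ?_
    simp only [← heq x hx]
    ring
  have hsource : ∫ x in a..b, g x * smoothSign δ (S x) ≤ ∫ x in a..b, |g x| :=
    intervalIntegral.integral_mono_on hab (hg.mul_continuousOn hψS) hg.abs fun x _ => calc
      g x * smoothSign δ (S x) ≤ |g x| * |smoothSign δ (S x)| :=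
        (le_abs_self _).trans (abs_mul _ _).le
      _ ≤ |g x| := mul_le_of_le_one_right (abs_nonneg _) (abs_smoothSign_le_one δ (S x))
  have habs : ∫ x in a..b, |S x| ≤ (∫ x in a..b, S x * smoothSign δ (S x)) + δ * (b - a) := by
    have := intervalIntegral.integral_mono_on hab (hI ▸ hSc.abs).intervalIntegrable
      (hSψS.add intervalIntegrable_const) fun x _ => abs_le_mul_smoothSign_add hδ (S x)
    rwa [intervalIntegral.integral_add hSψS intervalIntegrable_const,
      intervalIntegral.integral_const, smul_eq_mul, mul_comm (b - a)] at this
  nlinarith [mul_nonpos_of_nonneg_of_nonpos hc hflux]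

theorem integral_abs_le_integral_abs_of_flux (hab : a ≤ b) (hc : 0 ≤ c)
    (hS : ∀ x ∈ Icc a b, DifferentiableAt ℝ S x) (hS' : ContinuousOn (deriv S) (Icc a b))
    (hF : ∀ x ∈ Icc a b, DifferentiableAt ℝ F x) (hF' : IntervalIntegrable (deriv F) volume a b)
    (hFa : F a = 0) (hFb : F b = 0) (hFS : ∀ x ∈ Icc a b, 0 ≤ F x * deriv S x)
    (hg : IntervalIntegrable g volume a b) (heq : ∀ x ∈ Ioo a b, S x - c * deriv F x = g x) :
    ∫ x in a..b, |S x| ≤ ∫ x in a..b, |g x| := by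
  refine le_of_forall_pos_le_add fun η hη => ?_
  have hlen : 0 < b - a + 1 := by linarith
  calc ∫ x in a..b, |S x| ≤ (∫ x in a..b, |g x|) + η / (b - a + 1) * (b - a) :=
        integral_abs_le_integral_abs_add_of_flux (div_pos hη hlen) hab hc hS hS' hF hF' hFa hFb
          hFS hg heq
    _ ≤ (∫ x in a..b, |g x|) + η := by
        gcongr
        rw [div_mul_eq_mul_div, div_le_iff₀ hlen]
        nlinarith

theorem abs_mul_le_integral_abs_add (hab : a ≤ b) (hF : ∀ x ∈ Icc a b, DifferentiableAt ℝ F x)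
    (hF' : IntervalIntegrable (deriv F) volume a b) (hFa : F a = 0)
    (hS : IntervalIntegrable S volume a b) (hg : IntervalIntegrable g volume a b)
    (heq : ∀ x ∈ Ioo a b, S x - c * deriv F x = g x) {x : ℝ} (hx : x ∈ Icc a b) :
    |c * F x| ≤ (∫ t in a..b, |S t|) + ∫ t in a..b, |g t| := by
  have hsub : uIcc a x ⊆ uIcc a b := by
    rw [uIcc_of_le hx.1, uIcc_of_le hab]; exact Icc_subset_Icc le_rfl hx.2
  have hFx : c * F x = ∫ t in a..x, (S t - g t) := calc
    c * F x = c * ∫ t in a..x, deriv F t := by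
      rw [intervalIntegral.integral_eq_sub_of_hasDerivAt
        (fun t ht => (hF t (uIcc_of_le hab ▸ hsub ht)).hasDerivAt) (hF'.mono_set hsub), hFa,
        sub_zero]
    _ = ∫ t in a..x, c * deriv F t := (intervalIntegral.integral_const_mul _ _).symm
    _ = ∫ t in a..x, (S t - g t) := intervalIntegral.integral_congr_Ioo_of_le hx.1
      fun t ht => by linarith [heq t ⟨ht.1, ht.2.trans_le hx.2⟩]
  rw [hFx]
  calc |∫ t in a..x, (S t - g t)| ≤ ∫ t in a..x, |S t - g t| :=
        intervalIntegral.abs_integral_le_integral_abs hx.1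
    _ ≤ ∫ t in a..b, |S t - g t| :=
        intervalIntegral.integral_mono_interval le_rfl hx.1 hx.2
          (Filter.Eventually.of_forall fun t => abs_nonneg _) (hS.sub hg).abs
    _ ≤ ∫ t in a..b, (|S t| + |g t|) :=
        intervalIntegral.integral_mono_on hab (hS.sub hg).abs (hS.abs.add hg.abs)
          fun t _ => abs_sub _ _
    _ = (∫ t in a..b, |S t|) + ∫ t in a..b, |g t| := intervalIntegral.integral_add hS.abs hg.abs

theorem mul_sSup_abs_le_integral_abs_add (hab : a ≤ b) (hc : 0 < c)
    (hF : ∀ x ∈ Icc a b, DifferentiableAt ℝ F x)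
    (hF' : IntervalIntegrable (deriv F) volume a b) (hFa : F a = 0)
    (hS : IntervalIntegrable S volume a b) (hg : IntervalIntegrable g volume a b)
    (heq : ∀ x ∈ Ioo a b, S x - c * deriv F x = g x) :
    c * sSup ((fun x => |F x|) '' Icc a b) ≤ (∫ t in a..b, |S t|) + ∫ t in a..b, |g t| := by
  rw [← le_div_iff₀' hc]
  refine Real.sSup_le ?_ (div_nonneg ?_ hc.le)
  · rintro _ ⟨x, hx, rfl⟩
    rw [le_div_iff₀' hc, ← abs_of_pos hc, ← abs_mul]
    exact abs_mul_le_integral_abs_add hab hF hF' hFa hS hg heq hx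
  · exact add_nonneg (intervalIntegral.integral_nonneg hab fun t _ => abs_nonneg _)
      (intervalIntegral.integral_nonneg hab fun t _ => abs_nonneg _)

end FluxEquation

theorem sigma_problem_properties_general
    (L ε : ℝ) (hL : 0 < L) (hε : ε ∈ Ioo (0:ℝ) 1)
    (H σ Γ S : ℝ → ℝ)
    -- `H ∈ C¹([0,L])` with `H ≥ √ε`
    (hHreg : ∀ x ∈ Icc (0:ℝ) L, DifferentiableAt ℝ H x)
    (hHlb : ∀ x ∈ Icc (0:ℝ) L, Real.sqrt ε ≤ H x)
    -- `σ ∈ C¹([0,∞))`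
    (hσreg : ∀ r ≥ (0:ℝ), DifferentiableAt ℝ σ r)
    (hσreg' : ContinuousOn (deriv σ) (Ici 0))
    -- `Γ ∈ W₂¹(0,L)` nonnegative
    (hΓreg : ∀ x ∈ Icc (0:ℝ) L, DifferentiableAt ℝ Γ x)
    (hΓL2 : MemLp (deriv Γ) 2 (volume.restrict (Ioo 0 L)))
    (hΓnn : ∀ x ∈ Icc (0:ℝ) L, 0 ≤ Γ x)
    -- `S ∈ W₂²(0,L)` solves `S − ε²∂ₓ(H∂ₓS) = σ(Γ)` with Neumann boundary conditions
    (hSreg : ∀ x ∈ Icc (0:ℝ) L, DifferentiableAt ℝ S x ∧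
      DifferentiableAt ℝ (fun y => H y * deriv S y) x)
    (hSL2 : MemLp (deriv (fun y => H y * deriv S y)) 2 (volume.restrict (Ioo 0 L)))
    (hSeq : ∀ x ∈ Ioo (0:ℝ) L,
      S x - ε ^ 2 * deriv (fun y => H y * deriv S y) x = σ (Γ x))
    (hSbc : deriv S 0 = 0 ∧ deriv S L = 0) :
    ((∫ x in (0:ℝ)..L, H x * (deriv S x) ^ 2) +
        2 * ε ^ 2 * ∫ x in (0:ℝ)..L, (deriv (fun y => H y * deriv S y) x) ^ 2)
      ≤ (∫ x in (0:ℝ)..L, H x * (deriv (fun y => σ (Γ y)) x) ^ 2) ∧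
    (∫ x in (0:ℝ)..L, |S x|) ≤ (∫ x in (0:ℝ)..L, |σ (Γ x)|) ∧
    ε ^ 2 * sSup ((fun x => |H x * deriv S x|) '' Icc (0:ℝ) L) ≤
      2 * ∫ x in (0:ℝ)..L, |σ (Γ x)| := by
  have hL0 := hL.le
  have hI : uIcc 0 L = Icc 0 L := uIcc_of_le hL0
  have hHpos : ∀ x ∈ Icc 0 L, 0 < H x := fun x hx => (Real.sqrt_pos.2 hε.1).trans_le (hHlb x hx)
  have hH : ContinuousOn H (Icc 0 L) := fun x hx => (hHreg x hx).continuousAt.continuousWithinAt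
  have hS' : ContinuousOn (deriv S) (Icc 0 L) := hH.of_mul_left_of_ne_zero
    (fun x hx => (hHpos x hx).ne') fun x hx => (hSreg x hx).2.continuousAt.continuousWithinAt
  have hg : ∀ x ∈ Icc 0 L, HasDerivAt (fun y => σ (Γ y)) (deriv σ (Γ x) * deriv Γ x) x :=
    fun x hx => (hσreg _ (hΓnn x hx)).hasDerivAt.comp x (hΓreg x hx).hasDerivAt
  have hσ'Γ : ContinuousOn (fun x => deriv σ (Γ x)) (uIcc 0 L) := hI ▸
    hσreg'.comp (fun x hx => (hΓreg x hx).continuousAt.continuousWithinAt) hΓnn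
  have hHσ'Γ : ContinuousOn (fun x => H x * deriv σ (Γ x) ^ 2) (uIcc 0 L) :=
    (hI ▸ hH).mul (hσ'Γ.pow 2)
  obtain ⟨hΓ', hΓ'sq⟩ := intervalIntegrable_and_sq_of_memLp_two hL0 hΓL2
  obtain ⟨hF', hF'sq⟩ := intervalIntegrable_and_sq_of_memLp_two hL0 hSL2
  have hFa : H 0 * deriv S 0 = 0 := by rw [hSbc.1, mul_zero]
  have hFb : H L * deriv S L = 0 := by rw [hSbc.2, mul_zero]
  have hSi : IntervalIntegrable S volume 0 L := ContinuousOn.intervalIntegrable <|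
    continuousOn_of_forall_continuousAt fun x hx => (hSreg x (hI ▸ hx)).1.continuousAt
  have hgi : IntervalIntegrable (fun x => σ (Γ x)) volume 0 L := ContinuousOn.intervalIntegrable <|
    continuousOn_of_forall_continuousAt fun x hx => (hg x (hI ▸ hx)).continuousAt
  have hL1 := integral_abs_le_integral_abs_of_flux hL0 (sq_nonneg ε) (fun x hx => (hSreg x hx).1)
    hS' (fun x hx => (hSreg x hx).2) hF' hFa hFb
    (fun x hx => by rw [mul_assoc]; exact mul_nonneg (hHpos x hx).le (mul_self_nonneg _)) hgi hSeq
  refine ⟨?_, hL1, ?_⟩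
  · calc _ ≤ ∫ x in (0:ℝ)..L, H x * (deriv σ (Γ x) * deriv Γ x) ^ 2 :=
          integral_mul_sq_deriv_add_le_of_flux hL0 hH (fun x hx => (hHpos x hx).le)
            (fun x hx => (hSreg x hx).1) hS' (fun _ _ => rfl) (fun x hx => (hSreg x hx).2) hF'
            hF'sq hFa hFb hg (hΓ'.continuousOn_mul hσ'Γ) (by
              convert hΓ'sq.continuousOn_mul hHσ'Γ using 2 with x
              ring) hSeq
      _ = _ := intervalIntegral.integral_congr fun x hx => by rw [(hg x (hI ▸ hx)).deriv]
  · calc _ ≤ (∫ x in (0:ℝ)..L, |S x|) + ∫ x in (0:ℝ)..L, |σ (Γ x)| :=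
          mul_sSup_abs_le_integral_abs_add hL0 (pow_pos hε.1 2) (fun x hx => (hSreg x hx).2) hF' hFa
            hSi hgi hSeq
      _ ≤ _ := by linarith

/-- Properties of the solution `S` of the degenerate elliptic problem
`S − ε²∂ₓ(H ∂ₓS) = σ(Γ)` with Neumann boundary conditions, where `H ≥ √ε`:
`‖√H ∂ₓS‖₂² + 2ε²‖∂ₓ(H∂ₓS)‖₂² ≤ ‖√H ∂ₓσ(Γ)‖₂²`, `‖S‖₁ ≤ ‖σ(Γ)‖₁` and
`ε²‖H ∂ₓS‖_∞ ≤ 2‖σ(Γ)‖₁`. -/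
theorem sigma_problem_properties
    (L ε : ℝ) (hL : 0 < L) (hε : ε ∈ Ioo (0:ℝ) 1)
    (H σ Γ S : ℝ → ℝ)
    -- `H ∈ C¹([0,L])` with `H ≥ √ε`
    (hHreg : ∀ x ∈ Icc (0:ℝ) L, DifferentiableAt ℝ H x)
    (hHreg' : ContinuousOn (deriv H) (Icc 0 L))
    (hHlb : ∀ x ∈ Icc (0:ℝ) L, Real.sqrt ε ≤ H x)
    -- `σ ∈ C¹([0,∞))`
    (hσreg : ∀ r ≥ (0:ℝ), DifferentiableAt ℝ σ r)
    (hσreg' : ContinuousOn (deriv σ) (Ici 0))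
    -- `Γ ∈ W₂¹(0,L)` nonnegative
    (hΓreg : ∀ x ∈ Icc (0:ℝ) L, DifferentiableAt ℝ Γ x)
    (hΓL2 : MemLp (deriv Γ) 2 (volume.restrict (Ioo 0 L)))
    (hΓnn : ∀ x ∈ Icc (0:ℝ) L, 0 ≤ Γ x)
    -- `S ∈ W₂²(0,L)` solves `S − ε²∂ₓ(H∂ₓS) = σ(Γ)` with Neumann boundary conditions
    (hSreg : ∀ x ∈ Icc (0:ℝ) L, DifferentiableAt ℝ S x ∧
      DifferentiableAt ℝ (fun y => H y * deriv S y) x)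
    (hSL2 : MemLp (deriv (fun y => H y * deriv S y)) 2 (volume.restrict (Ioo 0 L)))
    (hSeq : ∀ x ∈ Ioo (0:ℝ) L,
      S x - ε ^ 2 * deriv (fun y => H y * deriv S y) x = σ (Γ x))
    (hSbc : deriv S 0 = 0 ∧ deriv S L = 0) :
    ((∫ x in (0:ℝ)..L, H x * (deriv S x) ^ 2) +
        2 * ε ^ 2 * ∫ x in (0:ℝ)..L, (deriv (fun y => H y * deriv S y) x) ^ 2)
      ≤ (∫ x in (0:ℝ)..L, H x * (deriv (fun y => σ (Γ y)) x) ^ 2) ∧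
    (∫ x in (0:ℝ)..L, |S x|) ≤ (∫ x in (0:ℝ)..L, |σ (Γ x)|) ∧
    ε ^ 2 * sSup ((fun x => |H x * deriv S x|) '' Icc (0:ℝ) L) ≤
      2 * ∫ x in (0:ℝ)..L, |σ (Γ x)| :=
  sigma_problem_properties_general L ε hL hε H σ Γ S hHreg hHlb hσreg hσreg' hΓreg hΓL2 hΓnn hSreg
    hSL2 hSeq hSbc
end

section
/- Let ε > 0, let Γ ∈ C([0,L]) with Γ(x) ≥ ε for all x ∈ [0,L], and let B ∈ W₂²(0,L) be the solution of B − ε² ∂ₓ²B = Γ on (0,L) with ∂ₓB(0) = ∂ₓB(L) = 0 (so B ≥ ε > 0). Then the entropy is decreased by the resolvent: ∫₀ᴸ ( B(x) ln B(x) − B(x) ) dx ≤ ∫₀ᴸ ( Γ(x) ln Γ(x) − Γ(x) ) dx. -/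
/-!
Write `φ t = t log t - t`. Since `φ` is convex with `φ' = log`, the tangent line at `B x` gives
`φ (B x) ≤ φ (Γ x) + log (B x) * (B x - Γ x) = φ (Γ x) + ε² log (B x) B''(x)`, and integrating by
parts against the Neumann condition, `∫ log B · B'' = -∫ B'² / B ≤ 0`.

For the logarithms to make sense we need `B > 0`, which is the minimum principle: at a minimum
point `x₀` of `B` on `[0, L]` the first derivative vanishes (at the ends by the boundary condition),
so the second derivative is nonnegative and `B x₀ = Γ x₀ + ε² B''(x₀) ≥ ε`.
-/

open MeasureTheory Set

theorem Real.mul_log_sub_add_log_mul_sub_le {b g : ℝ} (hb : 0 < b) (hg : 0 < g) :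
    b * Real.log b - b + Real.log b * (g - b) ≤ g * Real.log g - g := by
  have h := Real.one_sub_inv_le_log_of_pos (div_pos hg hb)
  rw [Real.log_div hg.ne' hb.ne', inv_div] at h
  have h' := mul_le_mul_of_nonneg_left h hg.le
  rw [mul_sub, mul_one, mul_div_cancel₀ _ hg.ne'] at h'
  linarith

section SecondDerivative

variable {f : ℝ → ℝ} {x₀ : ℝ}

theorem exists_lt_right_of_deriv_deriv_neg {c : ℝ} (hc : x₀ < c) (hf : ContinuousOn f (Icc x₀ c))
    (hd : deriv f x₀ = 0) (hdd : deriv (deriv f) x₀ < 0) : ∃ y ∈ Ioc x₀ c, f y < f x₀ := by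
  obtain ⟨d, hxd, hneg⟩ := (nhdsGT_basis x₀).eventually_iff.mp <| deriv_neg_right_of_sign_deriv <|
    nhdsWithin_le_nhds <| eventually_nhdsWithin_sign_eq_of_deriv_neg hdd hd
  have hy : x₀ < min c d := lt_min hc hxd
  have hanti : StrictAntiOn f (Icc x₀ (min c d)) := by
    refine strictAntiOn_of_deriv_neg (convex_Icc _ _)
      (hf.mono (Icc_subset_Icc_right (min_le_left _ _))) fun x hx => ?_
    rw [interior_Icc] at hx
    exact hneg ⟨hx.1, hx.2.trans_le (min_le_right _ _)⟩
  exact ⟨min c d, ⟨hy, min_le_left _ _⟩,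
    hanti (left_mem_Icc.2 hy.le) (right_mem_Icc.2 hy.le) hy⟩

theorem exists_lt_left_of_deriv_deriv_neg {c : ℝ} (hc : c < x₀) (hf : ContinuousOn f (Icc c x₀))
    (hd : deriv f x₀ = 0) (hdd : deriv (deriv f) x₀ < 0) : ∃ y ∈ Ico c x₀, f y < f x₀ := by
  obtain ⟨d, hdx, hpos⟩ := (nhdsLT_basis x₀).eventually_iff.mp <| deriv_pos_left_of_sign_deriv <|
    nhdsWithin_le_nhds <| eventually_nhdsWithin_sign_eq_of_deriv_neg hdd hd
  have hy : max c d < x₀ := max_lt hc hdx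
  have hmono : StrictMonoOn f (Icc (max c d) x₀) := by
    refine strictMonoOn_of_deriv_pos (convex_Icc _ _)
      (hf.mono (Icc_subset_Icc_left (le_max_left _ _))) fun x hx => ?_
    rw [interior_Icc] at hx
    exact hpos ⟨(le_max_right _ _).trans_lt hx.1, hx.2⟩
  exact ⟨max c d, ⟨le_max_left _ _, hy⟩,
    hmono (left_mem_Icc.2 hy.le) (right_mem_Icc.2 hy.le) hy⟩

theorem IsMinOn.deriv_deriv_nonneg_of_deriv_eq_zero {a b : ℝ} (hab : a < b)
    (hf : ContinuousOn f (Icc a b)) (hmin : IsMinOn f (Icc a b) x₀) (hx₀ : x₀ ∈ Icc a b)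
    (hd : deriv f x₀ = 0) : 0 ≤ deriv (deriv f) x₀ := by
  by_contra! hdd
  rcases hx₀.2.lt_or_eq with hlt | rfl
  · obtain ⟨y, hy, hfy⟩ :=
      exists_lt_right_of_deriv_deriv_neg hlt (hf.mono (Icc_subset_Icc_left hx₀.1)) hd hdd
    exact (hmin ⟨hx₀.1.trans hy.1.le, hy.2⟩).not_gt hfy
  · obtain ⟨y, hy, hfy⟩ := exists_lt_left_of_deriv_deriv_neg hab hf hd hdd
    exact (hmin ⟨hy.1, hy.2.le⟩).not_gt hfy

end SecondDerivative

theorem minimum_principle_neumann {B Γ : ℝ → ℝ} {a b c m : ℝ} (hab : a < b) (hc : 0 ≤ c)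
    (hB : ContinuousOn B (Icc a b)) (hbc : deriv B a = 0 ∧ deriv B b = 0)
    (heq : EqOn (fun x => B x - c * deriv (deriv B) x) Γ (Icc a b))
    (hΓ : ∀ x ∈ Icc a b, m ≤ Γ x) : ∀ x ∈ Icc a b, m ≤ B x := by
  obtain ⟨x₀, hx₀, hmin⟩ := isCompact_Icc.exists_isMinOn (nonempty_Icc.2 hab.le) hB
  have hd : deriv B x₀ = 0 := by
    rcases eq_endpoints_or_mem_Ioo_of_mem_Icc hx₀ with rfl | rfl | hint
    · exact hbc.1
    · exact hbc.2
    · exact (hmin.isLocalMin (Icc_mem_nhds hint.1 hint.2)).deriv_eq_zero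
  have hdd := hmin.deriv_deriv_nonneg_of_deriv_eq_zero hab hB hx₀ hd
  have hBx₀ : B x₀ - c * deriv (deriv B) x₀ = Γ x₀ := heq hx₀
  intro x hx
  have hmin_le : B x₀ ≤ B x := hmin hx
  linarith [hΓ x₀ hx₀, mul_nonneg hc hdd]

theorem integral_log_mul_deriv_deriv_nonpos {B : ℝ → ℝ} {a b : ℝ} (hab : a ≤ b)
    (hpos : ∀ x ∈ Icc a b, 0 < B x)
    (hreg : ∀ x ∈ Icc a b, DifferentiableAt ℝ B x ∧ DifferentiableAt ℝ (deriv B) x)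
    (hB'' : ContinuousOn (deriv (deriv B)) (Icc a b)) (hbc : deriv B a = 0 ∧ deriv B b = 0) :
    ∫ x in a..b, Real.log (B x) * deriv (deriv B) x ≤ 0 := by
  rw [← uIcc_of_le hab] at hpos hreg hB''
  have hlog : ∀ x ∈ uIcc a b, HasDerivAt (fun y => Real.log (B y)) (deriv B x / B x) x :=
    fun x hx => (hreg x hx).1.hasDerivAt.log (hpos x hx).ne'
  have hB' : ∀ x ∈ uIcc a b, HasDerivAt (deriv B) (deriv (deriv B) x) x :=
    fun x hx => (hreg x hx).2.hasDerivAt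
  have hquot : ContinuousOn (fun x => deriv B x / B x) (uIcc a b) :=
    ContinuousOn.div (fun x hx => (hreg x hx).2.continuousAt.continuousWithinAt)
      (fun x hx => (hreg x hx).1.continuousAt.continuousWithinAt) fun x hx => (hpos x hx).ne'
  rw [intervalIntegral.integral_mul_deriv_eq_deriv_mul hlog hB' hquot.intervalIntegrable
    hB''.intervalIntegrable, hbc.1, hbc.2, mul_zero, mul_zero, sub_zero, zero_sub, neg_nonpos]
  refine intervalIntegral.integral_nonneg hab fun x hx => ?_
  rw [div_mul_eq_mul_div]
  exact div_nonneg (mul_self_nonneg _) (hpos x (uIcc_of_le hab ▸ hx)).le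

theorem ContinuousOn.mul_log_sub_self {f : ℝ → ℝ} {s : Set ℝ} (hf : ContinuousOn f s) :
    ContinuousOn (fun x => f x * Real.log (f x) - f x) s :=
  (Real.continuous_mul_log.comp_continuousOn hf).sub hf

/-- The Neumann resolvent decreases the entropy:
if `Γ ∈ C([0,L])` with `Γ ≥ ε > 0` and `B - ε²∂ₓ²B = Γ` on `(0,L)` with
`∂ₓB(0) = ∂ₓB(L) = 0` (so `B ≥ ε > 0`), then
`∫₀ᴸ (B ln B − B) ≤ ∫₀ᴸ (Γ ln Γ − Γ)`. -/
theorem resolvent_decreases_entropy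
    (L ε : ℝ) (hL : 0 < L) (hε : 0 < ε)
    (Γ B : ℝ → ℝ)
    (hΓcont : ContinuousOn Γ (Icc 0 L))
    (hΓlb : ∀ x ∈ Icc (0:ℝ) L, ε ≤ Γ x)
    (hBreg : ∀ x ∈ Icc (0:ℝ) L, DifferentiableAt ℝ B x ∧ DifferentiableAt ℝ (deriv B) x)
    (hBcont : ContinuousOn (deriv (deriv B)) (Icc 0 L))
    (hBeq : ∀ x ∈ Ioo (0:ℝ) L, B x - ε ^ 2 * deriv (deriv B) x = Γ x)
    (hBbc : deriv B 0 = 0 ∧ deriv B L = 0) :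
    (∫ x in (0:ℝ)..L, (B x * Real.log (B x) - B x)) ≤
      ∫ x in (0:ℝ)..L, (Γ x * Real.log (Γ x) - Γ x) := by
  have hBc : ContinuousOn B (Icc 0 L) := fun x hx =>
    (hBreg x hx).1.continuousAt.continuousWithinAt
  have heq : EqOn (fun x => B x - ε ^ 2 * deriv (deriv B) x) Γ (Icc 0 L) :=
    EqOn.of_subset_closure hBeq (hBc.sub (continuousOn_const.mul hBcont)) hΓcont
      Ioo_subset_Icc_self (closure_Ioo hL.ne).superset
  have hBpos : ∀ x ∈ Icc 0 L, 0 < B x := fun x hx =>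
    hε.trans_le (minimum_principle_neumann hL (sq_nonneg ε) hBc hBbc heq hΓlb x hx)
  have hmixc : ContinuousOn (fun x => Real.log (B x) * deriv (deriv B) x) (Icc 0 L) :=
    (hBc.log fun x hx => (hBpos x hx).ne').mul hBcont
  have htangent : ∀ x ∈ Icc 0 L, B x * Real.log (B x) - B x ≤
      Γ x * Real.log (Γ x) - Γ x + ε ^ 2 * (Real.log (B x) * deriv (deriv B) x) := fun x hx => by
    linear_combination Real.mul_log_sub_add_log_mul_sub_le (hBpos x hx) (hε.trans_le (hΓlb x hx))
      + Real.log (B x) * heq hx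
  have hintB := hBc.mul_log_sub_self.intervalIntegrable_of_Icc (μ := volume) hL.le
  have hintΓ := hΓcont.mul_log_sub_self.intervalIntegrable_of_Icc (μ := volume) hL.le
  have hintmix := (hmixc.const_mul (ε ^ 2)).intervalIntegrable_of_Icc (μ := volume) hL.le
  calc (∫ x in (0:ℝ)..L, (B x * Real.log (B x) - B x))
      ≤ ∫ x in (0:ℝ)..L, (Γ x * Real.log (Γ x) - Γ x
          + ε ^ 2 * (Real.log (B x) * deriv (deriv B) x)) :=
        intervalIntegral.integral_mono_on hL.le hintB (hintΓ.add hintmix) htangent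
    _ = (∫ x in (0:ℝ)..L, (Γ x * Real.log (Γ x) - Γ x))
          + ε ^ 2 * ∫ x in (0:ℝ)..L, Real.log (B x) * deriv (deriv B) x := by
        rw [intervalIntegral.integral_add hintΓ hintmix, intervalIntegral.integral_const_mul]
    _ ≤ ∫ x in (0:ℝ)..L, (Γ x * Real.log (Γ x) - Γ x) :=
        add_le_of_nonpos_right <| mul_nonpos_of_nonneg_of_nonpos (sq_nonneg ε) <|
          integral_log_mul_deriv_deriv_nonpos hL.le hBpos hBreg hBcont hBbc
end

section
/- Let s₁ ∈ (0,1). There is a constant C₉ = C₉(s₁) > 0 such that for every ε > 0, every w ∈ C^{s₁}([0,L]), and the solution N ∈ C²([0,L]) of N − ε² ∂ₓ²N = w with ∂ₓN(0) = ∂ₓN(L) = 0, one has ‖N‖_{C^{s₁}} ≤ C₉ ‖w‖_{C^{s₁}}; in particular the bound is uniform in ε. -/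
/-!
Let `c = K / (1 - s)` with `K` the Hölder constant of `w`. The barrier
`g = ((x - x₀)² + ε²)^{s/2}` satisfies `ε² g'' ≤ s g` and `|x - x₀|^s ≤ g`, so `c g` is a
supersolution dominating `N - w x₀`; the Neumann condition lets the maximum principle reach the
boundary. Hence `|N x - w x₀| ≤ c (|x - x₀|^s + ε^s)`, which bounds increments of `N` over
distances `h ≥ ε` by `3 c h^s`. For `h < ε` we bound `N'` instead: on a window it is at most
the mean slope plus the window length times `sup |N''|`. With a window of length `ε` and
`N'' = (N - w) / ε² = O(ε^{s-2})` this gives `|N'| = O(ε^{s-1}) ≤ O(h^{s-1})`; when `ε > L` the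
window is `[0, L]` and the maximum principle bound `|N| ≤ sup |w|` gives `|N'| = O(sup |w| / L)`.
-/

open MeasureTheory Set

noncomputable def holderNorm (L s : ℝ) (f : ℝ → ℝ) : ℝ :=
  sSup ((fun x => |f x|) '' Icc (0:ℝ) L) +
    sSup {c : ℝ | ∃ x ∈ Icc (0:ℝ) L, ∃ y ∈ Icc (0:ℝ) L, x ≠ y ∧
      c = |f x - f y| / |x - y| ^ s}

open Filter Topology

noncomputable def supNormIcc (L : ℝ) (f : ℝ → ℝ) : ℝ :=
  sSup ((fun x => |f x|) '' Icc (0:ℝ) L)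

noncomputable def holderSeminorm (L s : ℝ) (f : ℝ → ℝ) : ℝ :=
  sSup {c : ℝ | ∃ x ∈ Icc (0:ℝ) L, ∃ y ∈ Icc (0:ℝ) L, x ≠ y ∧ c = |f x - f y| / |x - y| ^ s}

theorem holderNorm_eq (L s : ℝ) (f : ℝ → ℝ) :
    holderNorm L s f = supNormIcc L f + holderSeminorm L s f := rfl

theorem abs_le_supNormIcc {L : ℝ} {f : ℝ → ℝ} (hf : ContinuousOn f (Icc 0 L)) {x : ℝ}
    (hx : x ∈ Icc 0 L) : |f x| ≤ supNormIcc L f :=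
  le_csSup (isCompact_Icc.image_of_continuousOn hf.abs).bddAbove ⟨x, hx, rfl⟩

theorem holderSeminorm_nonneg (L s : ℝ) (f : ℝ → ℝ) : 0 ≤ holderSeminorm L s f :=
  Real.sSup_nonneg fun _ ⟨_, _, _, _, _, hc⟩ => hc ▸ by positivity

theorem abs_sub_le_holderSeminorm {L s K : ℝ} {f : ℝ → ℝ}
    (hK : ∀ x ∈ Icc 0 L, ∀ y ∈ Icc 0 L, |f x - f y| ≤ K * |x - y| ^ s)
    {x y : ℝ} (hx : x ∈ Icc 0 L) (hy : y ∈ Icc 0 L) :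
    |f x - f y| ≤ holderSeminorm L s f * |x - y| ^ s := by
  rcases eq_or_ne x y with rfl | hxy
  · simpa using mul_nonneg (holderSeminorm_nonneg L s f) (Real.rpow_nonneg le_rfl s)
  have hpos : 0 < |x - y| ^ s := Real.rpow_pos_of_pos (abs_pos.2 (sub_ne_zero.2 hxy)) s
  have hbdd : BddAbove {c : ℝ | ∃ x ∈ Icc (0:ℝ) L, ∃ y ∈ Icc (0:ℝ) L, x ≠ y ∧
      c = |f x - f y| / |x - y| ^ s} := by
    refine ⟨K, ?_⟩
    rintro c ⟨x, hx, y, hy, hxy, rfl⟩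
    rw [div_le_iff₀ (Real.rpow_pos_of_pos (abs_pos.2 (sub_ne_zero.2 hxy)) s)]
    exact hK x hx y hy
  rw [← div_le_iff₀ hpos]
  exact le_csSup hbdd ⟨x, hx, y, hy, hxy, rfl⟩

theorem holderNorm_le {L s A B : ℝ} {f : ℝ → ℝ} (hA : 0 ≤ A) (hB : 0 ≤ B)
    (hfA : ∀ x ∈ Icc 0 L, |f x| ≤ A)
    (hfB : ∀ x ∈ Icc 0 L, ∀ y ∈ Icc 0 L, |f x - f y| ≤ B * |x - y| ^ s) :
    holderNorm L s f ≤ A + B := by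
  refine add_le_add (Real.sSup_le ?_ hA) (Real.sSup_le ?_ hB)
  · rintro _ ⟨x, hx, rfl⟩
    exact hfA x hx
  · rintro _ ⟨x, hx, y, hy, hxy, rfl⟩
    rw [div_le_iff₀ (Real.rpow_pos_of_pos (abs_pos.2 (sub_ne_zero.2 hxy)) s)]
    exact hfB x hx y hy

theorem exists_lt_of_deriv_nonneg_of_hasDerivAt_deriv_pos {φ φ' : ℝ → ℝ} {z b c : ℝ}
    (hzb : z < b) (hφ : ∀ t ∈ Icc z b, HasDerivAt φ (φ' t) t) (hφ' : HasDerivAt φ' c z)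
    (hc : 0 < c) (hz : 0 ≤ φ' z) : ∃ p ∈ Ioc z b, φ z < φ p := by
  have hslope : ∀ᶠ t in 𝓝[>] z, 0 < slope φ' z t :=
    ((hasDerivAt_iff_tendsto_slope.1 hφ').mono_left
      (nhdsWithin_mono z fun t ht => ne_of_gt ht)).eventually (eventually_gt_nhds hc)
  obtain ⟨u, hzu, hu⟩ := mem_nhdsGT_iff_exists_Ioo_subset.1 hslope
  have hzp : z < min u b := lt_min hzu hzb
  refine ⟨min u b, ⟨hzp, min_le_right _ _⟩, ?_⟩
  have hsub : Icc z (min u b) ⊆ Icc z b := Icc_subset_Icc_right (min_le_right _ _)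
  obtain ⟨η, hη, hφη⟩ := exists_hasDerivAt_eq_slope φ φ' hzp
    (fun t ht => (hφ t (hsub ht)).continuousAt.continuousWithinAt)
    (fun t ht => hφ t (hsub (Ioo_subset_Icc_self ht)))
  have hη_pos : 0 < φ' η := by
    have h : 0 < slope φ' z η := hu ⟨hη.1, hη.2.trans_le (min_le_left _ _)⟩
    rw [slope_def_field, div_pos_iff_of_pos_right (sub_pos.2 hη.1)] at h
    linarith
  rw [eq_div_iff (sub_pos.2 hzp).ne'] at hφη
  nlinarith [sub_pos.2 hzp]

theorem exists_lt_of_deriv_nonpos_of_hasDerivAt_deriv_pos {φ φ' : ℝ → ℝ} {a z c : ℝ}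
    (haz : a < z) (hφ : ∀ t ∈ Icc a z, HasDerivAt φ (φ' t) t) (hφ' : HasDerivAt φ' c z)
    (hc : 0 < c) (hz : φ' z ≤ 0) : ∃ p ∈ Ico a z, φ z < φ p := by
  have hrefl : ∀ t ∈ Icc (-z) (-a), HasDerivAt (fun t => φ (-t)) (-φ' (-t)) t := fun t ht => by
    simpa [Function.comp_def] using
      (hφ (-t) ⟨le_neg.1 ht.2, neg_le.1 ht.1⟩).comp t (hasDerivAt_neg t)
  have hrefl' : HasDerivAt (fun t => -φ' (-t)) c (-z) := by
    simpa [Function.comp_def] using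
      (HasDerivAt.comp_of_eq (-z) hφ' (hasDerivAt_neg (-z)) (neg_neg z).symm).fun_neg
  obtain ⟨p, hp, hlt⟩ := exists_lt_of_deriv_nonneg_of_hasDerivAt_deriv_pos (neg_lt_neg haz)
    hrefl hrefl' hc (by simpa using hz)
  exact ⟨-p, ⟨le_neg.1 hp.2, neg_lt.1 hp.1⟩, by simpa using hlt⟩

theorem neumann_maximum_principle {φ φ' φ'' : ℝ → ℝ} {a b : ℝ} (hab : a < b)
    (hφ : ∀ x ∈ Icc a b, HasDerivAt φ (φ' x) x) (hφ' : ∀ x ∈ Icc a b, HasDerivAt φ' (φ'' x) x)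
    (hpos : ∀ x ∈ Icc a b, 0 < φ x → 0 < φ'' x) (ha : 0 ≤ φ' a) (hb : φ' b ≤ 0) :
    ∀ x ∈ Icc a b, φ x ≤ 0 := by
  obtain ⟨z, hz, hmax⟩ := isCompact_Icc.exists_isMaxOn (nonempty_Icc.2 hab.le)
    fun x hx => (hφ x hx).continuousAt.continuousWithinAt
  suffices φ z ≤ 0 from fun x hx => (hmax hx).trans this
  by_contra! hz_pos
  have hz'' := hpos z hz hz_pos
  have no_right (hzb : z < b) (hz' : 0 ≤ φ' z) : False := by
    obtain ⟨p, hp, hlt⟩ := exists_lt_of_deriv_nonneg_of_hasDerivAt_deriv_pos hzb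
      (fun t ht => hφ t ⟨hz.1.trans ht.1, ht.2⟩) (hφ' z hz) hz'' hz'
    exact (hmax ⟨hz.1.trans hp.1.le, hp.2⟩).not_gt hlt
  have no_left (haz : a < z) (hz' : φ' z ≤ 0) : False := by
    obtain ⟨p, hp, hlt⟩ := exists_lt_of_deriv_nonpos_of_hasDerivAt_deriv_pos haz
      (fun t ht => hφ t ⟨ht.1, ht.2.trans hz.2⟩) (hφ' z hz) hz'' hz'
    exact (hmax ⟨hp.1, hp.2.le.trans hz.2⟩).not_gt hlt
  rcases hz.2.eq_or_lt with rfl | hzb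
  · exact no_left hab hb
  rcases hz.1.eq_or_lt with rfl | haz
  · exact no_right hzb ha
  exact no_right hzb ((hmax.isLocalMax (Icc_mem_nhds haz hzb)).hasDerivAt_eq_zero (hφ z hz)).ge

noncomputable def smoothDistRpow (ε s x₀ x : ℝ) : ℝ := ((x - x₀) ^ 2 + ε ^ 2) ^ (s / 2)

section SmoothDistRpow

variable {ε s : ℝ}

theorem sq_rpow_half {a : ℝ} (ha : 0 ≤ a) (s : ℝ) : (a ^ 2) ^ (s / 2) = a ^ s := by
  rw [← Real.rpow_natCast, ← Real.rpow_mul ha, Nat.cast_ofNat, mul_div_cancel₀ s two_ne_zero]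

theorem rpow_le_smoothDistRpow (hs : 0 ≤ s) (x₀ x : ℝ) :
    |x - x₀| ^ s ≤ smoothDistRpow ε s x₀ x := by
  rw [← sq_rpow_half (abs_nonneg _), sq_abs]
  exact Real.rpow_le_rpow (sq_nonneg _) (by nlinarith [sq_nonneg ε]) (by positivity)

theorem smoothDistRpow_le (hε : 0 ≤ ε) (hs0 : 0 ≤ s) (hs1 : s ≤ 1) (x₀ x : ℝ) :
    smoothDistRpow ε s x₀ x ≤ |x - x₀| ^ s + ε ^ s :=
  calc smoothDistRpow ε s x₀ x ≤ ((|x - x₀| + ε) ^ 2) ^ (s / 2) := by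
        refine Real.rpow_le_rpow (by positivity) ?_ (by positivity)
        nlinarith [sq_abs (x - x₀), abs_nonneg (x - x₀)]
    _ = (|x - x₀| + ε) ^ s := sq_rpow_half (by positivity) s
    _ ≤ |x - x₀| ^ s + ε ^ s := Real.rpow_add_le_add_rpow (abs_nonneg _) hε hs0 hs1

theorem hasDerivAt_smoothDistRpow (hε : ε ≠ 0) (s x₀ x : ℝ) :
    HasDerivAt (smoothDistRpow ε s x₀) (s * (x - x₀) * ((x - x₀) ^ 2 + ε ^ 2) ^ (s / 2 - 1)) x := by
  have hbase : HasDerivAt (fun y => (y - x₀) ^ 2 + ε ^ 2) (2 * (x - x₀)) x := by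
    simpa using (((hasDerivAt_id x).sub_const x₀).pow 2).add_const (ε ^ 2)
  exact (hbase.rpow_const (p := s / 2) (Or.inl (by positivity))).congr_deriv (by ring)

theorem hasDerivAt_deriv_smoothDistRpow (hε : ε ≠ 0) (s x₀ x : ℝ) :
    HasDerivAt (fun y => s * (y - x₀) * ((y - x₀) ^ 2 + ε ^ 2) ^ (s / 2 - 1))
      (s * ((x - x₀) ^ 2 + ε ^ 2) ^ (s / 2 - 1)
        + s * (s - 2) * (x - x₀) ^ 2 * ((x - x₀) ^ 2 + ε ^ 2) ^ (s / 2 - 2)) x := by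
  have hbase : HasDerivAt (fun y => (y - x₀) ^ 2 + ε ^ 2) (2 * (x - x₀)) x := by
    simpa using (((hasDerivAt_id x).sub_const x₀).pow 2).add_const (ε ^ 2)
  have hlin : HasDerivAt (fun y => s * (y - x₀)) s x := by
    simpa using ((hasDerivAt_id x).sub_const x₀).const_mul s
  have hpow := hbase.rpow_const (p := s / 2 - 1) (Or.inl (by positivity))
  rw [show s / 2 - 1 - 1 = s / 2 - 2 by ring] at hpow
  exact (hlin.mul hpow).congr_deriv (by ring)

theorem sq_mul_second_deriv_smoothDistRpow_le (hs0 : 0 ≤ s) (hs2 : s ≤ 2) (x₀ x : ℝ) :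
    ε ^ 2 * (s * ((x - x₀) ^ 2 + ε ^ 2) ^ (s / 2 - 1)
        + s * (s - 2) * (x - x₀) ^ 2 * ((x - x₀) ^ 2 + ε ^ 2) ^ (s / 2 - 2))
      ≤ s * smoothDistRpow ε s x₀ x := by
  rcases eq_or_ne ε 0 with rfl | hε
  · simp only [ne_eq, OfNat.ofNat_ne_zero, not_false_eq_true, zero_pow, zero_mul]
    exact mul_nonneg hs0 (Real.rpow_nonneg (by positivity) _)
  set P := (x - x₀) ^ 2 + ε ^ 2
  have hP : 0 < P := by positivity
  have hsecond : s * (s - 2) * (x - x₀) ^ 2 * P ^ (s / 2 - 2) ≤ 0 :=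
    mul_nonpos_of_nonpos_of_nonneg
      (mul_nonpos_of_nonpos_of_nonneg (mul_nonpos_of_nonneg_of_nonpos hs0 (by linarith))
        (sq_nonneg _)) (Real.rpow_nonneg hP.le _)
  have hfirst : ε ^ 2 * P ^ (s / 2 - 1) ≤ P ^ (s / 2) := by
    rw [Real.rpow_sub_one hP.ne', mul_div_left_comm]
    exact mul_le_of_le_one_right (Real.rpow_nonneg hP.le _)
      ((div_le_one hP).2 (by nlinarith [sq_nonneg (x - x₀)]))
  calc ε ^ 2 * (s * P ^ (s / 2 - 1) + s * (s - 2) * (x - x₀) ^ 2 * P ^ (s / 2 - 2))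
      ≤ s * (ε ^ 2 * P ^ (s / 2 - 1)) := by nlinarith [sq_nonneg ε]
    _ ≤ s * P ^ (s / 2) := mul_le_mul_of_nonneg_left hfirst hs0

end SmoothDistRpow

theorem abs_sub_le_of_abs_hasDerivAt_le {f f' : ℝ → ℝ} {s : Set ℝ} {C : ℝ} (hs : Convex ℝ s)
    (hf : ∀ x ∈ s, HasDerivAt f (f' x) x) (hC : ∀ x ∈ s, |f' x| ≤ C) {x y : ℝ} (hx : x ∈ s)
    (hy : y ∈ s) : |f x - f y| ≤ C * |x - y| := by
  simpa only [Real.norm_eq_abs] using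
    hs.norm_image_sub_le_of_norm_hasDerivWithin_le (fun x hx => (hf x hx).hasDerivWithinAt) hC hy hx

theorem abs_deriv_le_of_abs_second_deriv_le {f f' f'' : ℝ → ℝ} {a b B : ℝ} (hab : a < b)
    (hf : ∀ x ∈ Icc a b, HasDerivAt f (f' x) x) (hf' : ∀ x ∈ Icc a b, HasDerivAt f' (f'' x) x)
    (hB : ∀ x ∈ Icc a b, |f'' x| ≤ B) :
    ∀ t ∈ Icc a b, |f' t| ≤ |f b - f a| / (b - a) + B * (b - a) := by
  intro t ht
  obtain ⟨ξ, hξ, hξ_eq⟩ := exists_hasDerivAt_eq_slope f f' hab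
    (fun x hx => (hf x hx).continuousAt.continuousWithinAt)
    (fun x hx => hf x (Ioo_subset_Icc_self hx))
  have hξ_mem := Ioo_subset_Icc_self hξ
  have hvar : |f' t - f' ξ| ≤ B * (b - a) :=
    (abs_sub_le_of_abs_hasDerivAt_le (convex_Icc a b) hf' hB ht hξ_mem).trans
      (mul_le_mul_of_nonneg_left (Real.dist_le_of_mem_Icc ht hξ_mem)
        ((abs_nonneg _).trans (hB t ht)))
  calc |f' t| ≤ |f' ξ| + B * (b - a) := by linarith [abs_sub_abs_le_abs_sub (f' t) (f' ξ)]
    _ = |f b - f a| / (b - a) + B * (b - a) := by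
      rw [hξ_eq, abs_div, abs_of_pos (sub_pos.2 hab)]

structure IsNeumannSolution (L ε : ℝ) (w N N' N'' : ℝ → ℝ) : Prop where
  hasDerivAt : ∀ x ∈ Icc 0 L, HasDerivAt N (N' x) x
  hasDerivAt_deriv : ∀ x ∈ Icc 0 L, HasDerivAt N' (N'' x) x
  sub_mul_eq : ∀ x ∈ Icc 0 L, N x - ε ^ 2 * N'' x = w x
  deriv_left : N' 0 = 0
  deriv_right : N' L = 0

namespace IsNeumannSolution

variable {L ε : ℝ} {w N N' N'' : ℝ → ℝ}

theorem of_deriv (hL : 0 < L) (hw : ContinuousOn w (Icc 0 L))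
    (hN : ∀ x ∈ Icc 0 L, DifferentiableAt ℝ N x ∧ DifferentiableAt ℝ (deriv N) x)
    (hN'' : ContinuousOn (deriv (deriv N)) (Icc 0 L))
    (heq : ∀ x ∈ Ioo 0 L, N x - ε ^ 2 * deriv (deriv N) x = w x)
    (h0 : deriv N 0 = 0) (hL' : deriv N L = 0) :
    IsNeumannSolution L ε w N (deriv N) (deriv (deriv N)) where
  hasDerivAt x hx := (hN x hx).1.hasDerivAt
  hasDerivAt_deriv x hx := (hN x hx).2.hasDerivAt
  sub_mul_eq := EqOn.of_subset_closure heq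
    ((continuousOn_of_forall_continuousAt fun x hx => (hN x hx).1.continuousAt).sub
      (hN''.const_smul (ε ^ 2)))
    hw Ioo_subset_Icc_self (closure_Ioo hL.ne).ge
  deriv_left := h0
  deriv_right := hL'

theorem neg (hN : IsNeumannSolution L ε w N N' N'') :
    IsNeumannSolution L ε (fun x => -w x) (fun x => -N x) (fun x => -N' x) (fun x => -N'' x) where
  hasDerivAt x hx := (hN.hasDerivAt x hx).neg
  hasDerivAt_deriv x hx := (hN.hasDerivAt_deriv x hx).neg
  sub_mul_eq x hx := by linarith [hN.sub_mul_eq x hx]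
  deriv_left := by rw [hN.deriv_left, neg_zero]
  deriv_right := by rw [hN.deriv_right, neg_zero]

theorem second_deriv_eq (hN : IsNeumannSolution L ε w N N' N'') (hε : ε ≠ 0) {x : ℝ}
    (hx : x ∈ Icc 0 L) : N'' x = (N x - w x) / ε ^ 2 := by
  rw [eq_div_iff (pow_ne_zero 2 hε)]
  linarith [hN.sub_mul_eq x hx]

theorem le_of_forall_le (hN : IsNeumannSolution L ε w N N' N'') (hL : 0 < L) {M : ℝ}
    (hM : ∀ x ∈ Icc 0 L, w x ≤ M) : ∀ x ∈ Icc 0 L, N x ≤ M := by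
  have h := neumann_maximum_principle (φ := fun x => N x - M) hL
    (fun x hx => (hN.hasDerivAt x hx).sub_const M) hN.hasDerivAt_deriv
    (fun x hx hpos => pos_of_mul_pos_right (by linarith [hN.sub_mul_eq x hx, hM x hx])
      (sq_nonneg ε))
    hN.deriv_left.ge hN.deriv_right.le
  exact fun x hx => sub_nonpos.1 (h x hx)

theorem abs_le_of_forall_abs_le (hN : IsNeumannSolution L ε w N N' N'') (hL : 0 < L) {M : ℝ}
    (hM : ∀ x ∈ Icc 0 L, |w x| ≤ M) : ∀ x ∈ Icc 0 L, |N x| ≤ M := fun x hx =>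
  abs_le.2 ⟨neg_le.1 (hN.neg.le_of_forall_le hL (fun y hy => neg_le.1 (abs_le.1 (hM y hy)).1) x hx),
    hN.le_of_forall_le hL (fun y hy => (abs_le.1 (hM y hy)).2) x hx⟩

theorem sub_le_smoothDistRpow (hN : IsNeumannSolution L ε w N N' N'') (hL : 0 < L)
    (hε : ε ≠ 0) {s K : ℝ} (hs0 : 0 ≤ s) (hs1 : s < 1) (hK : 0 ≤ K)
    (hw : ∀ x ∈ Icc 0 L, ∀ y ∈ Icc 0 L, |w x - w y| ≤ K * |x - y| ^ s)
    {x₀ : ℝ} (hx₀ : x₀ ∈ Icc 0 L) :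
    ∀ x ∈ Icc 0 L, N x - w x₀ ≤ K / (1 - s) * smoothDistRpow ε s x₀ x := by
  set c := K / (1 - s)
  have hc : 0 ≤ c := div_nonneg hK (by linarith)
  have hcK : c * (1 - s) = K := div_mul_cancel₀ K (by linarith)
  set g' := fun y => s * (y - x₀) * ((y - x₀) ^ 2 + ε ^ 2) ^ (s / 2 - 1)
  set g'' := fun y => s * ((y - x₀) ^ 2 + ε ^ 2) ^ (s / 2 - 1)
    + s * (s - 2) * (y - x₀) ^ 2 * ((y - x₀) ^ 2 + ε ^ 2) ^ (s / 2 - 2)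
  have hsuper : ∀ x ∈ Icc 0 L, 0 < N x - w x₀ - c * smoothDistRpow ε s x₀ x →
      0 < N'' x - c * g'' x := by
    intro x hx hpos
    have hbarrier : ε ^ 2 * g'' x ≤ s * smoothDistRpow ε s x₀ x :=
      sq_mul_second_deriv_smoothDistRpow_le hs0 (by linarith) x₀ x
    have hwx := (abs_le.1 (hw x hx x₀ hx₀)).2
    have hg := rpow_le_smoothDistRpow (ε := ε) hs0 x₀ x
    refine pos_of_mul_pos_right ?_ (sq_nonneg ε)
    have hKG : K * smoothDistRpow ε s x₀ x =
        c * smoothDistRpow ε s x₀ x - c * s * smoothDistRpow ε s x₀ x := by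
      rw [← hcK]; ring
    nlinarith [hN.sub_mul_eq x hx, mul_le_mul_of_nonneg_left hbarrier hc,
      mul_le_mul_of_nonneg_left hg hK]
  have h := neumann_maximum_principle hL
    (φ := fun x => N x - w x₀ - c * smoothDistRpow ε s x₀ x) (φ' := fun x => N' x - c * g' x)
    (fun x hx => ((hN.hasDerivAt x hx).sub_const _).sub
      ((hasDerivAt_smoothDistRpow hε s x₀ x).const_mul c))
    (fun x hx => (hN.hasDerivAt_deriv x hx).sub
      ((hasDerivAt_deriv_smoothDistRpow hε s x₀ x).const_mul c))
    hsuper ?_ ?_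
  · exact fun x hx => sub_nonpos.1 (h x hx)
  · have hg' : g' 0 ≤ 0 := mul_nonpos_of_nonpos_of_nonneg
      (mul_nonpos_of_nonneg_of_nonpos hs0 (by linarith [hx₀.1]))
      (Real.rpow_nonneg (by positivity) _)
    simpa [hN.deriv_left] using mul_nonpos_of_nonneg_of_nonpos hc hg'
  · have hg' : 0 ≤ g' L :=
      mul_nonneg (mul_nonneg hs0 (by linarith [hx₀.2])) (Real.rpow_nonneg (by positivity) _)
    simpa [hN.deriv_right] using mul_nonneg hc hg'

theorem abs_sub_le_rpow_add (hN : IsNeumannSolution L ε w N N' N'') (hL : 0 < L)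
    (hε : 0 < ε) {s K : ℝ} (hs0 : 0 ≤ s) (hs1 : s < 1) (hK : 0 ≤ K)
    (hw : ∀ x ∈ Icc 0 L, ∀ y ∈ Icc 0 L, |w x - w y| ≤ K * |x - y| ^ s)
    {x₀ : ℝ} (hx₀ : x₀ ∈ Icc 0 L) :
    ∀ x ∈ Icc 0 L, |N x - w x₀| ≤ K / (1 - s) * (|x - x₀| ^ s + ε ^ s) := by
  intro x hx
  have hw_neg : ∀ x ∈ Icc 0 L, ∀ y ∈ Icc 0 L, |-w x - -w y| ≤ K * |x - y| ^ s :=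
    fun x hx y hy => by rw [neg_sub_neg, abs_sub_comm]; exact hw x hx y hy
  have hupper := hN.sub_le_smoothDistRpow hL hε.ne' hs0 hs1 hK hw hx₀ x hx
  have hlower := hN.neg.sub_le_smoothDistRpow hL hε.ne' hs0 hs1 hK hw_neg hx₀ x hx
  have hbarrier := mul_le_mul_of_nonneg_left (smoothDistRpow_le hε.le hs0 hs1.le x₀ x)
    (div_nonneg hK (by linarith : (0 : ℝ) ≤ 1 - s))
  rw [abs_le]
  constructor <;> linarith

theorem abs_sub_le_of_le_abs_sub (hN : IsNeumannSolution L ε w N N' N'') (hL : 0 < L)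
    (hε : 0 < ε) {s K : ℝ} (hs0 : 0 < s) (hs1 : s < 1) (hK : 0 ≤ K)
    (hw : ∀ x ∈ Icc 0 L, ∀ y ∈ Icc 0 L, |w x - w y| ≤ K * |x - y| ^ s)
    {x y : ℝ} (hx : x ∈ Icc 0 L) (hy : y ∈ Icc 0 L) (hxy : ε ≤ |x - y|) :
    |N x - N y| ≤ 3 * (K / (1 - s)) * |x - y| ^ s := by
  have hxy' := hN.abs_sub_le_rpow_add hL hε hs0.le hs1 hK hw hy x hx
  have hyy := hN.abs_sub_le_rpow_add hL hε hs0.le hs1 hK hw hy y hy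
  rw [sub_self, abs_zero, Real.zero_rpow hs0.ne', zero_add] at hyy
  have hεs := mul_le_mul_of_nonneg_left (Real.rpow_le_rpow hε.le hxy hs0.le)
    (div_nonneg hK (by linarith : (0 : ℝ) ≤ 1 - s))
  calc |N x - N y| ≤ |N x - w y| + |N y - w y| := by
        rw [abs_sub_comm (N y)]; exact abs_sub_le _ _ _
    _ ≤ 3 * (K / (1 - s)) * |x - y| ^ s := by nlinarith

theorem abs_deriv_le_mul_rpow_sub_one (hN : IsNeumannSolution L ε w N N' N'') (hL : 0 < L)
    (hε : 0 < ε) (hεL : ε ≤ L) {s K : ℝ} (hs0 : 0 < s) (hs1 : s < 1) (hK : 0 ≤ K)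
    (hw : ∀ x ∈ Icc 0 L, ∀ y ∈ Icc 0 L, |w x - w y| ≤ K * |x - y| ^ s) :
    ∀ t ∈ Icc 0 L, |N' t| ≤ 4 * (K / (1 - s)) * ε ^ (s - 1) := by
  intro t ht
  set c := K / (1 - s)
  set a := min t (L - ε)
  have hwindow : Icc a (a + ε) ⊆ Icc 0 L :=
    Icc_subset_Icc (le_min ht.1 (by linarith)) (by linarith [min_le_right t (L - ε)])
  have hta : t ∈ Icc a (a + ε) := by
    have h : t - ε ≤ a := le_min (by linarith) (by linarith [ht.2])
    exact ⟨min_le_left _ _, by linarith⟩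
  have hsecond : ∀ x ∈ Icc a (a + ε), |N'' x| ≤ c * ε ^ s / ε ^ 2 := by
    intro x hx
    have hxx := hN.abs_sub_le_rpow_add hL hε hs0.le hs1 hK hw (hwindow hx) x (hwindow hx)
    rw [sub_self, abs_zero, Real.zero_rpow hs0.ne', zero_add] at hxx
    rw [hN.second_deriv_eq hε.ne' (hwindow hx), abs_div, abs_of_pos (pow_pos hε 2)]
    gcongr
  have hosc : |N (a + ε) - N a| ≤ 3 * c * ε ^ s := by
    have h := hN.abs_sub_le_of_le_abs_sub hL hε hs0 hs1 hK hw
      (hwindow (right_mem_Icc.2 (by linarith))) (hwindow (left_mem_Icc.2 (by linarith)))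
      (by rw [add_sub_cancel_left, abs_of_pos hε])
    rwa [add_sub_cancel_left, abs_of_pos hε] at h
  calc |N' t| ≤ |N (a + ε) - N a| / (a + ε - a) + c * ε ^ s / ε ^ 2 * (a + ε - a) :=
        abs_deriv_le_of_abs_second_deriv_le (by linarith) (fun x hx => hN.hasDerivAt x (hwindow hx))
          (fun x hx => hN.hasDerivAt_deriv x (hwindow hx)) hsecond t hta
    _ ≤ 3 * c * ε ^ s / ε + c * ε ^ s / ε ^ 2 * ε := by
      rw [add_sub_cancel_left]; gcongr
    _ = 4 * c * ε ^ (s - 1) := by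
      rw [Real.rpow_sub_one hε.ne']; field_simp; ring

theorem abs_deriv_le_div (hN : IsNeumannSolution L ε w N N' N'') (hL : 0 < L)
    (hLε : L < ε) {M : ℝ} (hM : ∀ x ∈ Icc 0 L, |w x| ≤ M) :
    ∀ t ∈ Icc 0 L, |N' t| ≤ 4 * M / L := by
  intro t ht
  have hN_le := hN.abs_le_of_forall_abs_le hL hM
  have hsecond : ∀ x ∈ Icc 0 L, |N'' x| ≤ 2 * M / L ^ 2 := by
    intro x hx
    rw [hN.second_deriv_eq (by linarith) hx, abs_div, abs_of_pos (pow_pos (hL.trans hLε) 2)]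
    calc |N x - w x| / ε ^ 2 ≤ 2 * M / ε ^ 2 := by
          gcongr; linarith [abs_sub (N x) (w x), hN_le x hx, hM x hx]
      _ ≤ 2 * M / L ^ 2 := by
          have := (abs_nonneg _).trans (hM x hx)
          gcongr
  have hosc : |N L - N 0| ≤ 2 * M := by
    linarith [abs_sub (N L) (N 0), hN_le L (right_mem_Icc.2 hL.le), hN_le 0 (left_mem_Icc.2 hL.le)]
  calc |N' t| ≤ |N L - N 0| / (L - 0) + 2 * M / L ^ 2 * (L - 0) :=
        abs_deriv_le_of_abs_second_deriv_le hL hN.hasDerivAt hN.hasDerivAt_deriv hsecond t ht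
    _ ≤ 2 * M / L + 2 * M / L ^ 2 * L := by
      rw [sub_zero]; gcongr
    _ = 4 * M / L := by field_simp; ring

theorem abs_sub_le_mul_rpow (hN : IsNeumannSolution L ε w N N' N'') (hL : 0 < L)
    (hε : 0 < ε) {s K M : ℝ} (hs0 : 0 < s) (hs1 : s < 1) (hK : 0 ≤ K)
    (hw : ∀ x ∈ Icc 0 L, ∀ y ∈ Icc 0 L, |w x - w y| ≤ K * |x - y| ^ s)
    (hM : ∀ x ∈ Icc 0 L, |w x| ≤ M) :
    ∀ x ∈ Icc 0 L, ∀ y ∈ Icc 0 L,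
      |N x - N y| ≤ (4 * (K / (1 - s)) + 4 * (M / L ^ s)) * |x - y| ^ s := by
  intro x hx y hy
  have hcK : 0 ≤ K / (1 - s) * |x - y| ^ s :=
    mul_nonneg (div_nonneg hK (by linarith)) (by positivity)
  have hcM : 0 ≤ M / L ^ s * |x - y| ^ s :=
    mul_nonneg (div_nonneg ((abs_nonneg _).trans (hM 0 (left_mem_Icc.2 hL.le))) (by positivity))
      (by positivity)
  rcases le_or_gt ε |x - y| with hεh | hhε
  · have h := hN.abs_sub_le_of_le_abs_sub hL hε hs0 hs1 hK hw hx hy hεh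
    linarith
  rcases eq_or_ne x y with rfl | hxy
  · simp [Real.zero_rpow hs0.ne']
  have hh : 0 < |x - y| := abs_pos.2 (sub_ne_zero.2 hxy)
  rcases le_or_gt ε L with hεL | hLε
  · have hpow : ε ^ (s - 1) * |x - y| ≤ |x - y| ^ s := by
      calc ε ^ (s - 1) * |x - y| ≤ |x - y| ^ (s - 1) * |x - y| :=
            mul_le_mul_of_nonneg_right (Real.rpow_le_rpow_of_nonpos hh hhε.le (by linarith)) hh.le
        _ = |x - y| ^ s := by rw [Real.rpow_sub_one hh.ne', div_mul_cancel₀ _ hh.ne']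
    have hgrad := abs_sub_le_of_abs_hasDerivAt_le (convex_Icc 0 L) hN.hasDerivAt
      (hN.abs_deriv_le_mul_rpow_sub_one hL hε hεL hs0 hs1 hK hw) hx hy
    have hc := div_nonneg hK (by linarith : (0 : ℝ) ≤ 1 - s)
    nlinarith [mul_le_mul_of_nonneg_left hpow hc]
  · have hxyL : |x - y| ≤ L := by
      rw [abs_sub_le_iff]; constructor <;> linarith [hx.1, hx.2, hy.1, hy.2]
    have hpow : |x - y| / L ≤ |x - y| ^ s / L ^ s := by
      rw [← Real.div_rpow hh.le hL.le]
      exact Real.self_le_rpow_of_le_one (by positivity) ((div_le_one hL).2 hxyL) hs1.le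
    have hgrad := abs_sub_le_of_abs_hasDerivAt_le (convex_Icc 0 L) hN.hasDerivAt
      (hN.abs_deriv_le_div hL hLε hM) hx hy
    have hM0 := (abs_nonneg _).trans (hM 0 (left_mem_Icc.2 hL.le))
    have h1 : 4 * M / L * |x - y| = 4 * M * (|x - y| / L) := by ring
    have h2 : M / L ^ s * |x - y| ^ s = M * (|x - y| ^ s / L ^ s) := by ring
    nlinarith [mul_le_mul_of_nonneg_left hpow hM0]

end IsNeumannSolution

/-- The Neumann resolvent `(1 - ε²∂ₓ²)⁻¹` is bounded on
`C^{s₁}([0,L])` uniformly in `ε > 0`. -/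
theorem resolvent_holder_bound
    (L : ℝ) (hL : 0 < L) (s₁ : ℝ) (hs₁ : s₁ ∈ Ioo (0:ℝ) 1) :
    ∃ C₉ > (0:ℝ), ∀ ε > (0:ℝ), ∀ w N : ℝ → ℝ,
      ContinuousOn w (Icc 0 L) →
      (∃ K : ℝ, 0 ≤ K ∧ ∀ x ∈ Icc (0:ℝ) L, ∀ y ∈ Icc (0:ℝ) L,
        |w x - w y| ≤ K * |x - y| ^ s₁) →
      (∀ x ∈ Icc (0:ℝ) L, DifferentiableAt ℝ N x ∧ DifferentiableAt ℝ (deriv N) x) →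
      ContinuousOn (deriv (deriv N)) (Icc 0 L) →
      (∀ x ∈ Ioo (0:ℝ) L, N x - ε ^ 2 * deriv (deriv N) x = w x) →
      deriv N 0 = 0 → deriv N L = 0 →
      holderNorm L s₁ N ≤ C₉ * holderNorm L s₁ w := by
  obtain ⟨hs0, hs1⟩ := hs₁
  have h4s : 0 < 4 / (1 - s₁) := div_pos four_pos (by linarith)
  have h4L : 0 < 4 / L ^ s₁ := div_pos four_pos (Real.rpow_pos_of_pos hL s₁)
  refine ⟨1 + 4 / (1 - s₁) + 4 / L ^ s₁, by positivity, ?_⟩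
  intro ε hε w N hw_cont ⟨K, hK, hwK⟩ hdiff hcont heq h0 hL'
  have hN := IsNeumannSolution.of_deriv hL hw_cont hdiff hcont heq h0 hL'
  set M := supNormIcc L w
  set S := holderSeminorm L s₁ w
  have hM : ∀ x ∈ Icc 0 L, |w x| ≤ M := fun x hx => abs_le_supNormIcc hw_cont hx
  have hM0 : 0 ≤ M := (abs_nonneg _).trans (hM 0 (left_mem_Icc.2 hL.le))
  have hS0 : 0 ≤ S := holderSeminorm_nonneg L s₁ w
  have hS : ∀ x ∈ Icc 0 L, ∀ y ∈ Icc 0 L, |w x - w y| ≤ S * |x - y| ^ s₁ :=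
    fun x hx y hy => abs_sub_le_holderSeminorm hwK hx hy
  calc holderNorm L s₁ N ≤ M + (4 * (S / (1 - s₁)) + 4 * (M / L ^ s₁)) :=
        holderNorm_le hM0 (by positivity) (hN.abs_le_of_forall_abs_le hL hM)
          (hN.abs_sub_le_mul_rpow hL hε hs0 hs1 hS0 hS hM)
    _ ≤ (1 + 4 / (1 - s₁) + 4 / L ^ s₁) * (M + S) := by
        have e (a b : ℝ) : 4 * (a / b) = 4 / b * a := by ring
        rw [e, e]
        nlinarith [mul_nonneg h4s.le hM0, mul_nonneg h4L.le hS0]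
    _ = (1 + 4 / (1 - s₁) + 4 / L ^ s₁) * holderNorm L s₁ w := by rw [holderNorm_eq]
end

section
/- Let U be an open bounded subset of ℝᵐ, m ≥ 1, let (vₙ)ₙ be a sequence in L₁(U) and (wₙ)ₙ a sequence in L_∞(U), and let v ∈ L₁(U), w ∈ L_∞(U). Assume vₙ converges to v weakly in L₁(U), and that there is C > 0 with |wₙ(x)| ≤ C for all n and a.e. x ∈ U and wₙ(x) → w(x) for a.e. x ∈ U. Then limₙ ∫_U |vₙ| |wₙ − w| dx = 0 and the products vₙ wₙ converge to v w weakly in L₁(U). -/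
/-!
A weakly convergent sequence `vₙ` in `L¹` is bounded in `L¹` (Banach–Steinhaus, with `vₙ` acting
on `L^∞`) and uniformly integrable (Vitali–Hahn–Saks: Baire's theorem applied to the functionals
`g ↦ ∫ vₙ g` on the unit ball of `L^∞` with the `L¹` metric gives one ball on which they are
uniformly Cauchy, and perturbing its centre on a small set `s` by `sign vₙ` bounds `∫_s |vₙ|`).
Since `wₙ → w` in measure, `|wₙ - w| < η` outside a set of small measure, where uniform
integrability controls `∫ |vₙ| |wₙ - w|`; elsewhere the `L¹` bound does. Writing
`vₙ wₙ = vₙ (wₙ - w) + vₙ w` then gives the weak convergence of the products.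
-/

open MeasureTheory Set Filter Topology
open scoped ENNReal

theorem exists_ball_forall_abs_sub_le_of_cauchySeq {X : Type*} [MetricSpace X] [CompleteSpace X]
    [Nonempty X] {T : ℕ → X → ℝ} (hT : ∀ n, Continuous (T n))
    (hcauchy : ∀ x, CauchySeq fun n => T n x) {ε : ℝ} (hε : 0 < ε) :
    ∃ k x₀, ∃ r > 0, ∀ x ∈ Metric.ball x₀ r, ∀ n ≥ k, |T n x - T k x| ≤ ε := by
  let F : ℕ → Set X := fun k => ⋂ n ∈ Ici k, {x | |T n x - T k x| ≤ ε}
  have hF : ∀ k, IsClosed (F k) := fun k =>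
    isClosed_biInter fun n _ => isClosed_le (by fun_prop) continuous_const
  have hcover : ⋃ k, F k = univ := by
    refine eq_univ_of_forall fun x => mem_iUnion.2 ?_
    obtain ⟨k, hk⟩ := Metric.cauchySeq_iff'.1 (hcauchy x) ε hε
    exact ⟨k, mem_iInter₂.2 fun n hn => by simpa [Real.dist_eq] using (hk n hn).le⟩
  obtain ⟨k, x₀, hx₀⟩ := nonempty_interior_of_iUnion_of_closed hF hcover
  obtain ⟨r, hr, hball⟩ := Metric.isOpen_iff.1 isOpen_interior x₀ hx₀
  exact ⟨k, x₀, r, hr, fun x hx n hn => mem_iInter₂.1 (interior_subset (hball hx)) n hn⟩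

namespace MeasureTheory

variable {α : Type*} [MeasurableSpace α] {μ : Measure α}

theorem Lp.isClosed_setOf_ae_mem {E : Type*} [NormedAddCommGroup E] {p : ℝ≥0∞} [Fact (1 ≤ p)]
    {s : Set E} (hs : IsClosed s) : IsClosed {g : Lp E p μ | ∀ᵐ x ∂μ, g x ∈ s} := by
  refine IsSeqClosed.isClosed fun g g₀ hg hlim => ?_
  obtain ⟨φ, -, hφ⟩ := (tendstoInMeasure_of_tendsto_Lp hlim).exists_seq_tendsto_ae
  filter_upwards [ae_all_iff.2 hg, hφ] with x hx hφx
  exact hs.mem_of_tendsto hφx (Eventually.of_forall fun n => hx (φ n))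

theorem L1.dist_eq_integral_abs (g h : Lp ℝ 1 μ) : dist g h = ∫ x, |g x - h x| ∂μ := by
  rw [dist_eq_norm, L1.norm_eq_integral_norm]
  refine integral_congr_ae ?_
  filter_upwards [Lp.coeFn_sub g h] with x hx
  rw [Real.norm_eq_abs, hx, Pi.sub_apply]

theorem AEStronglyMeasurable.exists_abs_le_one_mul_eq_abs {f : α → ℝ}
    (hf : AEStronglyMeasurable f μ) :
    ∃ u : α → ℝ, AEStronglyMeasurable u μ ∧ (∀ x, |u x| ≤ 1) ∧ ∀ x, f x * u x = |f x| := by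
  have hsign : Monotone fun t : ℝ => (SignType.sign t : ℝ) := fun a b hab => by
    rcases lt_trichotomy a 0 with ha | ha | ha <;> rcases lt_trichotomy b 0 with hb | hb | hb <;>
      simp [ha, hb] <;> linarith
  refine ⟨fun x => SignType.sign (f x),
    (hsign.measurable.comp_aemeasurable hf.aemeasurable).aestronglyMeasurable,
    fun x => ?_, fun x => by rw [mul_comm, sign_mul_self]⟩
  rcases lt_trichotomy (f x) 0 with h | h | h <;> simp [h]

theorem MemLp.exists_ae_abs_le {g : α → ℝ} (hg : MemLp g ∞ μ) : ∃ C, ∀ᵐ x ∂μ, |g x| ≤ C := by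
  refine ⟨(eLpNorm g ∞ μ).toReal, ?_⟩
  filter_upwards [ae_le_eLpNormEssSup (f := g) (μ := μ)] with x hx
  rw [← ofReal_norm] at hx
  rw [eLpNorm_exponent_top, ← Real.norm_eq_abs]
  exact (ENNReal.ofReal_le_iff_le_toReal hg.2.ne).1 hx

theorem eLpNorm_indicator_one_eq_ofReal_setIntegral_abs {f : α → ℝ} (hf : Integrable f μ)
    {s : Set α} (hs : MeasurableSet s) :
    eLpNorm (s.indicator f) 1 μ = ENNReal.ofReal (∫ x in s, |f x| ∂μ) := by
  rw [eLpNorm_indicator_eq_eLpNorm_restrict hs, eLpNorm_one_eq_lintegral_enorm,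
    ← ofReal_integral_norm_eq_lintegral_enorm hf.restrict]
  rfl

theorem unifIntegrable_one_iff {ι : Type*} {f : ι → α → ℝ} (hf : ∀ i, Integrable (f i) μ) :
    UnifIntegrable f 1 μ ↔ ∀ ⦃ε : ℝ⦄, 0 < ε → ∃ (δ : ℝ) (_ : 0 < δ), ∀ i s, MeasurableSet s →
      μ s ≤ ENNReal.ofReal δ → ∫ x in s, |f i x| ∂μ ≤ ε := by
  refine forall₂_congr fun ε hε => exists₂_congr fun δ _ => forall₄_congr fun i s hs _ => ?_
  rw [eLpNorm_indicator_one_eq_ofReal_setIntegral_abs (hf i) hs,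
    ENNReal.ofReal_le_ofReal_iff hε.le]

theorem exists_integral_abs_le_of_forall_memLp_top {ι : Type*} {f : ι → α → ℝ}
    (hf : ∀ i, Integrable (f i) μ)
    (hbdd : ∀ g : α → ℝ, MemLp g ∞ μ → ∃ C, ∀ i, |∫ x, f i x * g x ∂μ| ≤ C) :
    ∃ M, ∀ i, ∫ x, |f i x| ∂μ ≤ M := by
  let T : ι → Lp ℝ ∞ μ →L[ℝ] ℝ := fun i =>
    (ContinuousLinearMap.mul ℝ ℝ).lpPairing μ 1 ∞ ((hf i).toL1 (f i))
  have hT : ∀ i (g : α → ℝ) (hg : MemLp g ∞ μ), T i (hg.toLp g) = ∫ x, f i x * g x ∂μ := by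
    intro i g hg
    rw [ContinuousLinearMap.lpPairing_eq_integral]
    refine integral_congr_ae ?_
    filter_upwards [(hf i).coeFn_toL1, hg.coeFn_toLp] with x h₁ h₂
    simp only [ContinuousLinearMap.mul_apply', h₁, h₂]
  obtain ⟨M, hM⟩ := banach_steinhaus (g := T) fun g => by
    obtain ⟨C, hC⟩ := hbdd g (Lp.memLp g)
    refine ⟨C, fun i => ?_⟩
    simpa [← hT i g (Lp.memLp g)] using hC i
  refine ⟨M, fun i => ?_⟩
  obtain ⟨u, hu, hu1, hfu⟩ := (hf i).aestronglyMeasurable.exists_abs_le_one_mul_eq_abs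
  have hmem : MemLp u ∞ μ := memLp_top_of_bound hu 1 (Eventually.of_forall hu1)
  have hnorm : ‖hmem.toLp u‖ ≤ 1 := by
    rw [Lp.norm_toLp, eLpNorm_exponent_top]
    exact ENNReal.toReal_le_of_le_ofReal zero_le_one
      (eLpNormEssSup_le_of_ae_bound (Eventually.of_forall hu1))
  calc ∫ x, |f i x| ∂μ = T i (hmem.toLp u) := by simp_rw [hT, hfu]
    _ ≤ ‖T i‖ * ‖hmem.toLp u‖ := (le_abs_self _).trans ((T i).le_opNorm _)
    _ ≤ ‖T i‖ * 1 := by gcongr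
    _ ≤ M := by simpa using hM i

theorem Integrable.tendsto_integral_max_abs_sub_zero {f : α → ℝ} (hf : Integrable f μ) :
    Tendsto (fun M : ℕ => ∫ x, max (|f x| - M) 0 ∂μ) atTop (𝓝 0) := by
  have h := tendsto_integral_of_dominated_convergence (F := fun (M : ℕ) x => max (|f x| - M) 0)
    (f := fun _ => 0) (fun x => |f x|) (fun M => by fun_prop) hf.abs
    (fun M => Eventually.of_forall fun x => ?_)
    (Eventually.of_forall fun x => tendsto_const_nhds.congr' ?_)
  · simpa using h
  · rw [Real.norm_eq_abs, abs_of_nonneg (le_max_right _ _)]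
    exact max_le (by linarith [M.cast_nonneg (α := ℝ)]) (abs_nonneg _)
  · filter_upwards [eventually_ge_atTop ⌈|f x|⌉₊] with M hM
    rw [max_eq_right (by linarith [Nat.ceil_le.1 hM])]

theorem integral_abs_mul_le_of_ae_abs_le {f u : α → ℝ} (hf : Integrable f μ) (hu : Integrable u μ)
    {c : ℝ} (hc : ∀ᵐ x ∂μ, |u x| ≤ c) {M : ℝ} (hM : 0 ≤ M) :
    ∫ x, |f x| * |u x| ∂μ ≤ c * ∫ x, max (|f x| - M) 0 ∂μ + M * ∫ x, |u x| ∂μ := by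
  have htail : Integrable (fun x => max (|f x| - M) 0) μ :=
    hf.abs.mono (by fun_prop) (Eventually.of_forall fun x => by
      rw [Real.norm_eq_abs, Real.norm_eq_abs, abs_abs, abs_of_nonneg (le_max_right _ _)]
      exact max_le (by linarith) (abs_nonneg _))
  rw [← integral_const_mul, ← integral_const_mul,
    ← integral_add (htail.const_mul c) (hu.abs.const_mul M)]
  refine integral_mono_of_nonneg (Eventually.of_forall fun x => by positivity)
    ((htail.const_mul c).add (hu.abs.const_mul M)) ?_
  filter_upwards [hc] with x hx
  rcases le_total (|f x|) M with h | h
  · rw [max_eq_right (by linarith)]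
    nlinarith [abs_nonneg (u x)]
  · rw [max_eq_left (by linarith)]
    nlinarith [abs_nonneg (u x)]

theorem continuousOn_integral_mul {f : α → ℝ} (hf : Integrable f μ) :
    ContinuousOn (fun g : Lp ℝ 1 μ => ∫ x, f x * g x ∂μ) {g | ∀ᵐ x ∂μ, |g x| ≤ 1} := by
  rw [Metric.continuousOn_iff]
  intro b hb ε hε
  obtain ⟨M, hM⟩ := (hf.tendsto_integral_max_abs_sub_zero.eventually
    (gt_mem_nhds (show 0 < ε / 4 by positivity))).exists
  refine ⟨ε / (2 * (M + 1)), by positivity, fun a ha hab => ?_⟩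
  have hab_le : ∀ᵐ x ∂μ, |a x - b x| ≤ 2 := by
    filter_upwards [ha, hb] with x hax hbx
    linarith [abs_sub (a x) (b x)]
  rw [L1.dist_eq_integral_abs] at hab
  have hMε : (M : ℝ) * (ε / (2 * (M + 1))) ≤ ε / 2 := by
    rw [mul_div_assoc', div_le_div_iff₀ (by positivity) two_pos]
    nlinarith [M.cast_nonneg (α := ℝ)]
  rw [Real.dist_eq, ← integral_sub (hf.mul_bdd (Lp.aestronglyMeasurable a) ha)
    (hf.mul_bdd (Lp.aestronglyMeasurable b) hb)]
  calc |∫ x, (f x * a x - f x * b x) ∂μ| = |∫ x, f x * (a x - b x) ∂μ| := by simp only [mul_sub]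
    _ ≤ ∫ x, |f x * (a x - b x)| ∂μ := abs_integral_le_integral_abs
    _ = ∫ x, |f x| * |a x - b x| ∂μ := by simp only [abs_mul]
    _ ≤ 2 * ∫ x, max (|f x| - M) 0 ∂μ + M * ∫ x, |a x - b x| ∂μ :=
        integral_abs_mul_le_of_ae_abs_le hf ((L1.integrable_coeFn a).sub (L1.integrable_coeFn b))
          hab_le M.cast_nonneg
    _ < ε := by nlinarith [M.cast_nonneg (α := ℝ)]

theorem exists_forall_abs_integral_mul_sub_le_of_cauchySeq [IsFiniteMeasure μ]
    {f : ℕ → α → ℝ} (hf : ∀ n, Integrable (f n) μ)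
    (hcauchy : ∀ g : α → ℝ, MemLp g ∞ μ → CauchySeq fun n => ∫ x, f n x * g x ∂μ)
    {ε : ℝ} (hε : 0 < ε) :
    ∃ k, ∃ g₀ : α → ℝ, AEStronglyMeasurable g₀ μ ∧ (∀ᵐ x ∂μ, |g₀ x| ≤ 1) ∧ ∃ r > 0,
      ∀ φ : α → ℝ, AEStronglyMeasurable φ μ → (∀ᵐ x ∂μ, |φ x| ≤ 1) →
        ∫ x, |φ x - g₀ x| ∂μ < r →
          ∀ n ≥ k, |∫ x, f n x * φ x ∂μ - ∫ x, f k x * φ x ∂μ| ≤ ε := by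
  let X := {g : Lp ℝ 1 μ | ∀ᵐ x ∂μ, |g x| ≤ 1}
  have : CompleteSpace X :=
    (Lp.isClosed_setOf_ae_mem (isClosed_le continuous_abs continuous_const)).completeSpace_coe
  have : Nonempty X := ⟨⟨0, by filter_upwards [Lp.coeFn_zero ℝ 1 μ] with x hx; rw [hx]; simp⟩⟩
  obtain ⟨k, g₀, r, hr, hball⟩ := exists_ball_forall_abs_sub_le_of_cauchySeq
    (T := fun n (g : X) => ∫ x, f n x * (g : Lp ℝ 1 μ) x ∂μ)
    (fun n => (continuousOn_integral_mul (hf n)).domRestrict)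
    (fun g => hcauchy _ (memLp_top_of_bound (Lp.aestronglyMeasurable _) 1 g.2)) hε
  refine ⟨k, g₀.1, Lp.aestronglyMeasurable _, g₀.2, r, hr, fun φ hφ hφ1 hφr n hn => ?_⟩
  have hφi : Integrable φ μ := Integrable.of_bound hφ 1 hφ1
  have hφL1 : hφi.toL1 φ ∈ X := by
    filter_upwards [hφi.coeFn_toL1, hφ1] with x hx hx1
    rwa [hx]
  have hT : ∀ m, ∫ x, f m x * hφi.toL1 φ x ∂μ = ∫ x, f m x * φ x ∂μ := fun m =>
    integral_congr_ae (by filter_upwards [hφi.coeFn_toL1] with x hx; rw [hx])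
  have hdist : dist (⟨hφi.toL1 φ, hφL1⟩ : X) g₀ < r := by
    rwa [Subtype.dist_eq, L1.dist_eq_integral_abs,
      integral_congr_ae (by filter_upwards [hφi.coeFn_toL1] with x hx; rw [hx])]
  simpa only [hT] using hball _ hdist n hn

theorem integral_abs_piecewise_sub_le [IsFiniteMeasure μ] {s : Set α} [DecidablePred (· ∈ s)]
    (hs : MeasurableSet s) {v g : α → ℝ} (hv : ∀ x, |v x| ≤ 1) (hg : ∀ᵐ x ∂μ, |g x| ≤ 1) :
    ∫ x, |s.piecewise v g x - g x| ∂μ ≤ 2 * μ.real s := by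
  calc ∫ x, |s.piecewise v g x - g x| ∂μ ≤ ∫ x, s.indicator (fun _ => (2 : ℝ)) x ∂μ := by
        refine integral_mono_of_nonneg (Eventually.of_forall fun x => abs_nonneg _)
          ((integrable_const 2).indicator hs) ?_
        filter_upwards [hg] with x hx
        by_cases hxs : x ∈ s
        · simp only [hxs, Set.piecewise_eq_of_mem, Set.indicator_of_mem]
          linarith [abs_sub (v x) (g x), hv x]
        · simp [hxs]
    _ = 2 * μ.real s := by rw [integral_indicator_const _ hs, smul_eq_mul, mul_comm]

theorem integral_mul_piecewise {f v g : α → ℝ} {s : Set α} [DecidablePred (· ∈ s)]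
    (hs : MeasurableSet s) (hv : IntegrableOn (fun x => f x * v x) s μ)
    (hg : IntegrableOn (fun x => f x * g x) sᶜ μ) :
    ∫ x, f x * s.piecewise v g x ∂μ = ∫ x in s, f x * v x ∂μ + ∫ x in sᶜ, f x * g x ∂μ := by
  rw [← integral_piecewise hs hv hg]
  congr 1 with x
  by_cases hxs : x ∈ s <;> simp [hxs]

theorem exists_forall_ge_setIntegral_abs_le_of_cauchySeq [IsFiniteMeasure μ]
    {f : ℕ → α → ℝ} (hf : ∀ n, Integrable (f n) μ)
    (hcauchy : ∀ g : α → ℝ, MemLp g ∞ μ → CauchySeq fun n => ∫ x, f n x * g x ∂μ)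
    {ε : ℝ} (hε : 0 < ε) :
    ∃ k, ∃ δ > 0, ∀ n ≥ k, ∀ s, MeasurableSet s → μ s ≤ ENNReal.ofReal δ →
      ∫ x in s, |f n x| ∂μ ≤ ∫ x in s, |f k x| ∂μ + ε := by
  classical
  obtain ⟨k, g₀, hg₀, hg₀1, r, hr, hk⟩ :=
    exists_forall_abs_integral_mul_sub_le_of_cauchySeq hf hcauchy (half_pos hε)
  refine ⟨k, r / 4, by positivity, fun n hn s hs hμs => ?_⟩
  have hμs' : μ.real s ≤ r / 4 := ENNReal.toReal_le_of_le_ofReal (by positivity) hμs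
  have hclose : ∀ v : α → ℝ, AEStronglyMeasurable v μ → (∀ x, |v x| ≤ 1) → ∀ m ≥ k,
      |∫ x, f m x * s.piecewise v g₀ x ∂μ - ∫ x, f k x * s.piecewise v g₀ x ∂μ| ≤ ε / 2 :=
    fun v hv hv1 => hk _ (hv.restrict.piecewise hs hg₀.restrict)
      (by filter_upwards [hg₀1] with x hx; by_cases hxs : x ∈ s <;> simp [hxs, hx, hv1 x])
      ((integral_abs_piecewise_sub_le hs hv1 hg₀1).trans_lt (by linarith))
  have hsplit : ∀ m (v : α → ℝ), AEStronglyMeasurable v μ → (∀ x, |v x| ≤ 1) →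
      ∫ x, f m x * s.piecewise v g₀ x ∂μ =
        ∫ x in s, f m x * v x ∂μ + ∫ x in sᶜ, f m x * g₀ x ∂μ := fun m v hv hv1 =>
    integral_mul_piecewise hs ((hf m).mul_bdd hv (Eventually.of_forall hv1)).integrableOn
      ((hf m).mul_bdd hg₀ hg₀1).integrableOn
  -- testing against `s.piecewise (sign ∘ f n) g₀` and `s.piecewise 0 g₀` isolates `∫_s |f n|`
  obtain ⟨u, hu, hu1, hfu⟩ := (hf n).aestronglyMeasurable.exists_abs_le_one_mul_eq_abs
  have h0 : ∀ x, |(0 : α → ℝ) x| ≤ 1 := by simp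
  have hpos := hclose u hu hu1 n hn
  have hzero := hclose 0 aestronglyMeasurable_const h0 n hn
  rw [hsplit n u hu hu1, hsplit k u hu hu1] at hpos
  rw [hsplit n 0 aestronglyMeasurable_const h0, hsplit k 0 aestronglyMeasurable_const h0] at hzero
  have hfk : ∫ x in s, f k x * u x ∂μ ≤ ∫ x in s, |f k x| ∂μ :=
    setIntegral_mono ((hf k).mul_bdd hu (Eventually.of_forall hu1)).integrableOn
      (hf k).abs.integrableOn fun x => (le_abs_self _).trans <| by
        rw [abs_mul]; exact mul_le_of_le_one_right (abs_nonneg _) (hu1 x)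
  simp only [hfu, Pi.zero_apply, mul_zero, integral_zero, zero_add] at hpos hzero
  linarith [abs_le.1 hpos, abs_le.1 hzero]

theorem unifIntegrable_of_cauchySeq_integral_mul [IsFiniteMeasure μ] {f : ℕ → α → ℝ}
    (hf : ∀ n, Integrable (f n) μ)
    (hcauchy : ∀ g : α → ℝ, MemLp g ∞ μ → CauchySeq fun n => ∫ x, f n x * g x ∂μ) :
    UnifIntegrable f 1 μ := by
  rw [unifIntegrable_one_iff hf]
  intro ε hε
  obtain ⟨k, δ, hδ, hk⟩ :=
    exists_forall_ge_setIntegral_abs_le_of_cauchySeq hf hcauchy (half_pos hε)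
  obtain ⟨δ', hδ', hδ'k⟩ := (unifIntegrable_one_iff fun i : Fin (k + 1) => hf i).1
    (unifIntegrable_finite le_rfl ENNReal.one_ne_top fun i => memLp_one_iff_integrable.2 (hf i))
    (half_pos hε)
  refine ⟨min δ δ', lt_min hδ hδ', fun n s hs hμs => ?_⟩
  have hμs' : μ s ≤ ENNReal.ofReal δ' := hμs.trans (ENNReal.ofReal_le_ofReal (min_le_right _ _))
  rcases le_or_gt n k with hn | hn
  · exact (hδ'k ⟨n, Nat.lt_succ_of_le hn⟩ s hs hμs').trans (half_le_self hε.le)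
  · have := hk n hn.le s hs (hμs.trans (ENNReal.ofReal_le_ofReal (min_le_left _ _)))
    have hk' : ∫ x in s, |f k x| ∂μ ≤ ε / 2 := hδ'k (Fin.last k) s hs hμs'
    linarith

theorem integral_abs_mul_le_of_abs_le_on_compl {f h : α → ℝ} (hf : Integrable f μ) {K η : ℝ}
    (hK : ∀ᵐ x ∂μ, |h x| ≤ K) (hη : 0 ≤ η) {t : Set α} (ht : MeasurableSet t)
    (htη : ∀ x ∉ t, |h x| ≤ η) :
    ∫ x, |f x| * |h x| ∂μ ≤ K * ∫ x in t, |f x| ∂μ + η * ∫ x, |f x| ∂μ := by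
  rw [← integral_indicator ht, ← integral_const_mul, ← integral_const_mul,
    ← integral_add ((hf.abs.indicator ht).const_mul K) (hf.abs.const_mul η)]
  refine integral_mono_of_nonneg (Eventually.of_forall fun x => by positivity)
    (((hf.abs.indicator ht).const_mul K).add (hf.abs.const_mul η)) ?_
  filter_upwards [hK] with x hx
  by_cases hxt : x ∈ t
  · simp only [Set.indicator_of_mem hxt]
    nlinarith [abs_nonneg (f x), abs_nonneg (h x)]
  · simp only [Set.indicator_of_notMem hxt, mul_zero, zero_add]
    nlinarith [abs_nonneg (f x), htη x hxt]

theorem tendsto_integral_abs_mul_sub_of_unifIntegrable {f g : ℕ → α → ℝ} {g' : α → ℝ}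
    (hf : ∀ n, Integrable (f n) μ) (hui : UnifIntegrable f 1 μ) {M : ℝ}
    (hM : ∀ n, ∫ x, |f n x| ∂μ ≤ M) (hg : TendstoInMeasure μ g atTop g') {K : ℝ}
    (hK : ∀ n, ∀ᵐ x ∂μ, |g n x - g' x| ≤ K) :
    Tendsto (fun n => ∫ x, |f n x| * |g n x - g' x| ∂μ) atTop (𝓝 0) := by
  rw [Metric.tendsto_atTop]
  intro ε hε
  set η := ε / (2 * (|M| + 1)) with hη
  obtain ⟨δ, hδ, hui⟩ := (unifIntegrable_one_iff hf).1 hui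
    (show 0 < ε / (2 * (|K| + 1)) by positivity)
  obtain ⟨N, hN⟩ := ENNReal.tendsto_atTop_zero.1
    (tendstoInMeasure_iff_norm.1 hg η (by positivity)) _ (ENNReal.ofReal_pos.2 hδ)
  refine ⟨N, fun n hn => ?_⟩
  let t := toMeasurable μ {x | η ≤ ‖g n x - g' x‖}
  have htη : ∀ x ∉ t, |g n x - g' x| ≤ η := fun x hx => by
    have : x ∉ {x | η ≤ ‖g n x - g' x‖} := fun h => hx (subset_toMeasurable μ _ h)
    exact (not_le.1 this).le
  have ht := hui n t (measurableSet_toMeasurable _ _)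
    ((measure_toMeasurable _).trans_le (hN n hn))
  have hbound := integral_abs_mul_le_of_abs_le_on_compl (η := η) (hf n) (hK n) (by positivity)
    (measurableSet_toMeasurable μ _) htη
  have h₁ : K * ∫ x in t, |f n x| ∂μ ≤ ε / 2 := by
    calc _ ≤ |K| * (ε / (2 * (|K| + 1))) :=
          mul_le_mul (le_abs_self K) ht (integral_nonneg fun x => abs_nonneg _) (abs_nonneg K)
      _ ≤ ε / 2 := by
          rw [mul_div_assoc', div_le_div_iff₀ (by positivity) two_pos]
          nlinarith [abs_nonneg K]
  have h₂ : η * ∫ x, |f n x| ∂μ < ε / 2 := by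
    calc _ ≤ η * |M| := mul_le_mul_of_nonneg_left ((hM n).trans (le_abs_self M)) (by positivity)
      _ < ε / 2 := by
          rw [hη, div_mul_eq_mul_div, div_lt_div_iff₀ (by positivity) two_pos]
          nlinarith [abs_nonneg M]
  rw [Real.dist_eq, sub_zero, abs_of_nonneg (integral_nonneg fun x => by positivity)]
  linarith

theorem tendsto_integral_mul_mul_of_tendsto_integral_abs_mul_sub {f g : ℕ → α → ℝ}
    {f' g' ψ : α → ℝ} (hf : ∀ n, Integrable (f n) μ) (hg : ∀ n, MemLp (g n) ∞ μ)
    (hg' : MemLp g' ∞ μ) (hψ : MemLp ψ ∞ μ)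
    (hweak : Tendsto (fun n => ∫ x, f n x * (g' x * ψ x) ∂μ) atTop
      (𝓝 (∫ x, f' x * (g' x * ψ x) ∂μ)))
    (habs : Tendsto (fun n => ∫ x, |f n x| * |g n x - g' x| ∂μ) atTop (𝓝 0)) :
    Tendsto (fun n => ∫ x, f n x * g n x * ψ x ∂μ) atTop (𝓝 (∫ x, f' x * g' x * ψ x ∂μ)) := by
  obtain ⟨C, hC⟩ := hψ.exists_ae_abs_le
  have hsub : ∀ n, Integrable (fun x => f n x * (g n x - g' x)) μ := fun n =>
    (hf n).mul_of_top_left ((hg n).sub hg')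
  have hsplit : ∀ n, ∫ x, f n x * g n x * ψ x ∂μ =
      ∫ x, f n x * (g n x - g' x) * ψ x ∂μ + ∫ x, f n x * (g' x * ψ x) ∂μ := fun n => by
    have hint₁ : Integrable (fun x => f n x * (g n x - g' x) * ψ x) μ :=
      (hsub n).mul_of_top_left hψ
    have hint₂ : Integrable (fun x => f n x * (g' x * ψ x)) μ := (hf n).mul_of_top_left (hψ.mul hg')
    rw [← integral_add hint₁ hint₂]
    congr 1 with x
    ring
  have hsmall : Tendsto (fun n => ∫ x, f n x * (g n x - g' x) * ψ x ∂μ) atTop (𝓝 0) := by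
    refine squeeze_zero_norm (fun n => ?_) (by simpa using habs.const_mul C)
    calc ‖∫ x, f n x * (g n x - g' x) * ψ x ∂μ‖
        ≤ ∫ x, ‖f n x * (g n x - g' x) * ψ x‖ ∂μ := norm_integral_le_integral_norm _
      _ ≤ ∫ x, C * (|f n x| * |g n x - g' x|) ∂μ := by
          refine integral_mono_of_nonneg (Eventually.of_forall fun x => norm_nonneg _)
            (((hsub n).abs.congr (Eventually.of_forall fun x => abs_mul _ _)).const_mul C) ?_
          filter_upwards [hC] with x hx
          rw [Real.norm_eq_abs, abs_mul, abs_mul, mul_comm]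
          exact mul_le_mul_of_nonneg_right hx (by positivity)
      _ = C * ∫ x, |f n x| * |g n x - g' x| ∂μ := integral_const_mul _ _
  have hlim : ∫ x, f' x * g' x * ψ x ∂μ = ∫ x, f' x * (g' x * ψ x) ∂μ := by simp_rw [mul_assoc]
  rw [hlim]
  simpa only [← hsplit, zero_add] using hsmall.add hweak

end MeasureTheory

theorem weak_L1_times_ae_bounded_general
    (m : ℕ)
    (U : Set (Fin m → ℝ)) (hUbdd : Bornology.IsBounded U)
    (v : ℕ → (Fin m → ℝ) → ℝ) (vlim : (Fin m → ℝ) → ℝ)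
    (w : ℕ → (Fin m → ℝ) → ℝ) (wlim : (Fin m → ℝ) → ℝ)
    (hv : ∀ n, IntegrableOn (v n) U)
    (hweak : ∀ g : (Fin m → ℝ) → ℝ,
      AEStronglyMeasurable g (volume.restrict U) →
      (∃ Cg : ℝ, ∀ᵐ x ∂(volume.restrict U), |g x| ≤ Cg) →
      Tendsto (fun n => ∫ x in U, v n x * g x) atTop (nhds (∫ x in U, vlim x * g x)))
    (hwmeas : ∀ n, AEStronglyMeasurable (w n) (volume.restrict U))
    (C : ℝ)
    (hwbdd : ∀ n, ∀ᵐ x ∂(volume.restrict U), |w n x| ≤ C)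
    (hwconv : ∀ᵐ x ∂(volume.restrict U),
      Tendsto (fun n => w n x) atTop (nhds (wlim x))) :
    Tendsto (fun n => ∫ x in U, |v n x| * |w n x - wlim x|) atTop (nhds 0) ∧
    ∀ g : (Fin m → ℝ) → ℝ,
      AEStronglyMeasurable g (volume.restrict U) →
      (∃ Cg : ℝ, ∀ᵐ x ∂(volume.restrict U), |g x| ≤ Cg) →
      Tendsto (fun n => ∫ x in U, v n x * w n x * g x) atTop
        (nhds (∫ x in U, vlim x * wlim x * g x)) := by
  have : IsFiniteMeasure (volume.restrict U) := isFiniteMeasure_restrict.2 hUbdd.measure_lt_top.ne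
  have hweak' : ∀ g, MemLp g ∞ (volume.restrict U) → Tendsto (fun n => ∫ x in U, v n x * g x)
      atTop (𝓝 (∫ x in U, vlim x * g x)) := fun g hg => hweak g hg.1 hg.exists_ae_abs_le
  have hwlimbdd : ∀ᵐ x ∂(volume.restrict U), |wlim x| ≤ C := by
    filter_upwards [hwconv, ae_all_iff.2 hwbdd] with x hx hC
    exact le_of_tendsto' hx.abs hC
  have hwlim : MemLp wlim ∞ (volume.restrict U) :=
    memLp_top_of_bound (aestronglyMeasurable_of_tendsto_ae _ hwmeas hwconv) C hwlimbdd
  obtain ⟨M, hM⟩ := exists_integral_abs_le_of_forall_memLp_top hv fun g hg => by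
    obtain ⟨R, hR⟩ :=
      isBounded_iff_forall_norm_le.1 (Metric.isBounded_range_of_tendsto _ (hweak' g hg))
    exact ⟨R, fun n => hR _ (mem_range_self n)⟩
  have habs := tendsto_integral_abs_mul_sub_of_unifIntegrable hv
    (unifIntegrable_of_cauchySeq_integral_mul hv fun g hg => (hweak' g hg).cauchySeq) hM
    (tendstoInMeasure_of_tendsto_ae hwmeas hwconv) (K := 2 * C) fun n => by
      filter_upwards [hwbdd n, hwlimbdd] with x hxn hx
      linarith [abs_sub (w n x) (wlim x)]
  refine ⟨habs, fun g hgm ⟨Cg, hCg⟩ => ?_⟩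
  have hg : MemLp g ∞ (volume.restrict U) := memLp_top_of_bound hgm Cg hCg
  exact tendsto_integral_mul_mul_of_tendsto_integral_abs_mul_sub hv
    (fun n => memLp_top_of_bound (hwmeas n) C (hwbdd n)) hwlim hg (hweak' _ (hg.mul hwlim)) habs

/-- If `vₙ ⇀ v` weakly in `L₁(U)` and `(wₙ)` is uniformly bounded in
`L_∞(U)` and converges a.e. to `w`, then `∫ |vₙ||wₙ − w| → 0` and `vₙ wₙ ⇀ v w`
weakly in `L₁(U)`. Weak `L₁` convergence is expressed by testing against all bounded
measurable functions. -/
theorem weak_L1_times_ae_bounded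
    (m : ℕ) (hm : 1 ≤ m)
    (U : Set (Fin m → ℝ)) (hUopen : IsOpen U) (hUbdd : Bornology.IsBounded U)
    (v : ℕ → (Fin m → ℝ) → ℝ) (vlim : (Fin m → ℝ) → ℝ)
    (w : ℕ → (Fin m → ℝ) → ℝ) (wlim : (Fin m → ℝ) → ℝ)
    (hv : ∀ n, IntegrableOn (v n) U) (hvlim : IntegrableOn vlim U)
    (hweak : ∀ g : (Fin m → ℝ) → ℝ,
      AEStronglyMeasurable g (volume.restrict U) →
      (∃ Cg : ℝ, ∀ᵐ x ∂(volume.restrict U), |g x| ≤ Cg) →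
      Tendsto (fun n => ∫ x in U, v n x * g x) atTop (nhds (∫ x in U, vlim x * g x)))
    (hwmeas : ∀ n, AEStronglyMeasurable (w n) (volume.restrict U))
    (hwlimmeas : AEStronglyMeasurable wlim (volume.restrict U))
    (C : ℝ) (hC : 0 < C)
    (hwbdd : ∀ n, ∀ᵐ x ∂(volume.restrict U), |w n x| ≤ C)
    (hwconv : ∀ᵐ x ∂(volume.restrict U),
      Tendsto (fun n => w n x) atTop (nhds (wlim x))) :
    Tendsto (fun n => ∫ x in U, |v n x| * |w n x - wlim x|) atTop (nhds 0) ∧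
    ∀ g : (Fin m → ℝ) → ℝ,
      AEStronglyMeasurable g (volume.restrict U) →
      (∃ Cg : ℝ, ∀ᵐ x ∂(volume.restrict U), |g x| ≤ Cg) →
      Tendsto (fun n => ∫ x in U, v n x * w n x * g x) atTop
        (nhds (∫ x in U, vlim x * wlim x * g x)) :=
  weak_L1_times_ae_bounded_general m U hUbdd v vlim w wlim hv hweak hwmeas C hwbdd hwconv
end

section
/- Let G > 0, L > 0, M ≥ 0 and define A₁(r) := G r⁴/12 for r ≥ 0. There is a constant C = C(G, L, M) such that for every nonnegative h ∈ C([0,L]) with ∫₀ᴸ h dx ≤ M and A₁∘h ∈ C¹([0,L]): ‖A₁(h)‖_∞ ≤ C ( 1 + ‖∂ₓ A₁(h)‖_{L₂(0,L)} ). -/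
open MeasureTheory Set
open scoped Interval

/-!
At a minimum point `x₀` of `h` the mass bound gives `h x₀ ≤ M / L`, so `A₁(h x₀) ≤ A₁(M / L)`.
The fundamental theorem of calculus and Cauchy–Schwarz then give
`A₁(h x) ≤ A₁(h x₀) + √L ‖∂ₓ A₁(h)‖_{L₂}` for every `x`, so `C = max (A₁(M / L)) √L` works.
-/

noncomputable def A1 (G r : ℝ) : ℝ := G * r ^ 4 / 12

lemma A1_le_A1 {G r s : ℝ} (hG : 0 ≤ G) (hr : 0 ≤ r) (hrs : r ≤ s) : A1 G r ≤ A1 G s := by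
  unfold A1
  gcongr

lemma exists_mem_Icc_mul_le_intervalIntegral {h : ℝ → ℝ} {a b : ℝ} (hab : a ≤ b)
    (hh : ContinuousOn h (Icc a b)) :
    ∃ x₀ ∈ Icc a b, (b - a) * h x₀ ≤ ∫ x in a..b, h x := by
  obtain ⟨x₀, hx₀, hmin⟩ := isCompact_Icc.exists_isMinOn (nonempty_Icc.mpr hab) hh
  refine ⟨x₀, hx₀, ?_⟩
  simpa using intervalIntegral.integral_mono_on hab intervalIntegrable_const
    (hh.intervalIntegrable_of_Icc (μ := volume) hab) fun x hx => hmin hx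

lemma intervalIntegral_abs_le_sqrt_mul_sqrt {g : ℝ → ℝ} {a b : ℝ} (hab : a ≤ b)
    (hg : IntervalIntegrable g volume a b)
    (hg2 : IntervalIntegrable (fun x => g x ^ 2) volume a b) :
    ∫ x in a..b, |g x| ≤ √(b - a) * √(∫ x in a..b, g x ^ 2) := by
  set I := ∫ x in a..b, |g x|
  set S := ∫ x in a..b, g x ^ 2
  rw [← Real.sqrt_mul (sub_nonneg.mpr hab)]
  refine le_trans (le_abs_self I) (Real.abs_le_sqrt ?_)
  rcases hab.eq_or_lt with rfl | hlt
  · simp [I]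
  set m := I / (b - a)
  -- AM-GM against the mean value `m` of `|g|`, integrated over `[a, b]`
  have hpt : ∀ x ∈ Icc a b, 2 * m * |g x| ≤ g x ^ 2 + m ^ 2 := fun x _ => by
    nlinarith [sq_nonneg (|g x| - m), sq_abs (g x)]
  have hint := intervalIntegral.integral_mono_on hab (hg.abs.const_mul (2 * m))
    (hg2.add intervalIntegrable_const) hpt
  rw [intervalIntegral.integral_const_mul, intervalIntegral.integral_add hg2
    intervalIntegrable_const, intervalIntegral.integral_const, smul_eq_mul] at hint
  have hba : 0 < b - a := sub_pos.mpr hlt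
  have hmI : m * (b - a) = I := div_mul_cancel₀ I hba.ne'
  nlinarith

lemma abs_sub_le_intervalIntegral_abs_deriv {f : ℝ → ℝ} {a b x y : ℝ}
    (hf : ∀ z ∈ Icc a b, DifferentiableAt ℝ f z) (hf' : ContinuousOn (deriv f) (Icc a b))
    (hx : x ∈ Icc a b) (hy : y ∈ Icc a b) :
    |f x - f y| ≤ ∫ z in a..b, |deriv f z| := by
  have hsub : uIcc y x ⊆ Icc a b := uIcc_subset_Icc hy hx
  have hsub' : Ι y x ⊆ Ioc a b := Ioc_subset_Ioc (le_min hy.1 hx.1) (max_le hy.2 hx.2)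
  rw [← intervalIntegral.integral_deriv_eq_sub (fun z hz => hf z (hsub hz))
    (hf'.mono hsub).intervalIntegrable, intervalIntegral.integral_of_le (hx.1.trans hx.2)]
  calc |∫ z in y..x, deriv f z| ≤ ∫ z in Ι y x, |deriv f z| := by
        simpa only [Real.norm_eq_abs] using
          intervalIntegral.norm_integral_le_integral_norm_uIoc (f := deriv f) (μ := volume)
    _ ≤ ∫ z in Ioc a b, |deriv f z| :=
        setIntegral_mono_set (hf'.abs.integrableOn_Icc.mono_set Ioc_subset_Icc_self)
          (ae_of_all _ fun z => abs_nonneg _) hsub'.eventuallyLE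

theorem sup_bound_A1_general
    (G L M : ℝ) (hG : 0 < G) (hL : 0 < L) :
    ∃ C : ℝ, ∀ h : ℝ → ℝ,
      ContinuousOn h (Icc 0 L) →
      (∀ x ∈ Icc (0:ℝ) L, 0 ≤ h x) →
      (∫ x in (0:ℝ)..L, h x) ≤ M →
      (∀ x ∈ Icc (0:ℝ) L, DifferentiableAt ℝ (fun y => A1 G (h y)) x) →
      ContinuousOn (deriv (fun y => A1 G (h y))) (Icc 0 L) →
      sSup ((fun x => A1 G (h x)) '' Icc (0:ℝ) L) ≤
        C * (1 + Real.sqrt (∫ x in (0:ℝ)..L, (deriv (fun y => A1 G (h y)) x) ^ 2)) := by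
  refine ⟨max (A1 G (M / L)) √L, fun h hcont hpos hmass hdiff hdcont => ?_⟩
  set f : ℝ → ℝ := fun y => A1 G (h y)
  set S := ∫ x in (0:ℝ)..L, deriv f x ^ 2
  obtain ⟨x₀, hx₀, hx₀_mass⟩ := exists_mem_Icc_mul_le_intervalIntegral hL.le hcont
  have hfx₀ : f x₀ ≤ A1 G (M / L) :=
    A1_le_A1 hG.le (hpos x₀ hx₀) (by rw [le_div_iff₀ hL]; linarith)
  have hL1 : ∫ x in (0:ℝ)..L, |deriv f x| ≤ √L * √S := by
    simpa using intervalIntegral_abs_le_sqrt_mul_sqrt hL.le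
      (hdcont.intervalIntegrable_of_Icc hL.le) ((hdcont.pow 2).intervalIntegrable_of_Icc hL.le)
  refine csSup_le ((nonempty_Icc.mpr hL.le).image f) ?_
  rintro _ ⟨x, hx, rfl⟩
  calc f x ≤ f x₀ + |f x - f x₀| := by linarith [le_abs_self (f x - f x₀)]
    _ ≤ A1 G (M / L) + √L * √S :=
        add_le_add hfx₀ ((abs_sub_le_intervalIntegral_abs_deriv hdiff hdcont hx hx₀).trans hL1)
    _ ≤ max (A1 G (M / L)) √L * (1 + √S) := by
        nlinarith [le_max_left (A1 G (M / L)) √L, le_max_right (A1 G (M / L)) √L,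
          Real.sqrt_nonneg S]

/-- Sup bound for `A₁(h)` in terms of the `L₂` norm of its derivative,
uniform over nonnegative continuous `h` with mass `∫₀ᴸ h ≤ M`. -/
theorem sup_bound_A1
    (G L M : ℝ) (hG : 0 < G) (hL : 0 < L) (hM : 0 ≤ M) :
    ∃ C : ℝ, ∀ h : ℝ → ℝ,
      ContinuousOn h (Icc 0 L) →
      (∀ x ∈ Icc (0:ℝ) L, 0 ≤ h x) →
      (∫ x in (0:ℝ)..L, h x) ≤ M →
      (∀ x ∈ Icc (0:ℝ) L, DifferentiableAt ℝ (fun y => A1 G (h y)) x) →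
      ContinuousOn (deriv (fun y => A1 G (h y))) (Icc 0 L) →
      sSup ((fun x => A1 G (h x)) '' Icc (0:ℝ) L) ≤
        C * (1 + Real.sqrt (∫ x in (0:ℝ)..L, (deriv (fun y => A1 G (h y)) x) ^ 2)) :=
  sup_bound_A1_general G L M hG hL
end

section
/- Let σ ∈ C³([0,∞)) and 0 < σ₀ ≤ σ_∞ satisfy σ₀ ≤ −σ'(r) ≤ σ_∞ for all r ≥ 0, and let φ be defined on [0,∞) by φ''(r) = −σ'(r)/r for r > 0, φ(1) = φ'(1) = 0 (with φ(0) defined by continuity). Then for all r ≥ 0: σ₀ ( r ln r − r + 1 ) ≤ φ(r) ≤ σ_∞ ( r ln r − r + 1 ), where r ln r is understood as 0 at r = 0. Consequently, σ₀ r |ln r| ≤ φ(r) + σ₀ r + σ₀/e for all r ≥ 0. -/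
/-!
Write `H(r) = r ln r - r + 1`, so that `H'' = 1/r`. For `c ≤ -σ'` the function `φ - c H` has
nonnegative second derivative `(-σ'(r) - c)/r` on `(0, ∞)` and vanishes together with its
derivative at `1`; being convex, it is therefore nonnegative. This gives both bounds for `r > 0`
(with `c = σ₀` and, symmetrically, `c = σ_∞`), and continuity extends them to `r = 0`.
The last inequality follows from the lower bound and `-r ln r ≤ 1/e`.
-/

open Set Real Topology

/-- `f - g` is convex with vanishing derivative at `a`, hence minimal there. -/
theorem le_of_hasDerivAt2_le_of_eq {D : Set ℝ} (hD : Convex ℝ D) (hDo : IsOpen D)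
    {f f' f'' g g' g'' : ℝ → ℝ}
    (hf : ∀ x ∈ D, HasDerivAt f (f' x) x) (hf' : ∀ x ∈ D, HasDerivAt f' (f'' x) x)
    (hg : ∀ x ∈ D, HasDerivAt g (g' x) x) (hg' : ∀ x ∈ D, HasDerivAt g' (g'' x) x)
    (hle : ∀ x ∈ D, g'' x ≤ f'' x) {a : ℝ} (ha : a ∈ D) (h0 : g a = f a) (h1 : g' a = f' a) :
    ∀ x ∈ D, g x ≤ f x := by
  have hdiff : ∀ x ∈ D, HasDerivAt (f - g) ((f' - g') x) x := fun x hx => (hf x hx).sub (hg x hx)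
  have hconv : ConvexOn ℝ D (f - g) := by
    refine convexOn_of_hasDerivWithinAt2_nonneg (f' := f' - g') (f'' := f'' - g'') hD
      (fun x hx => (hdiff x hx).continuousAt.continuousWithinAt) ?_ ?_ ?_
    all_goals rw [hDo.interior_eq]
    · exact fun x hx => (hdiff x hx).hasDerivWithinAt
    · exact fun x hx => ((hf' x hx).sub (hg' x hx)).hasDerivWithinAt
    · exact fun x hx => sub_nonneg.2 (hle x hx)
  have hmin : IsMinOn (f - g) D a := by
    refine hconv.isMinOn_of_rightDeriv_eq_zero (by rwa [hDo.interior_eq]) ?_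
    rw [(hdiff a ha).hasDerivWithinAt.derivWithin (uniqueDiffWithinAt_Ioi a)]
    simp [h1]
  intro x hx
  simpa [h0] using hmin hx

theorem le_of_forall_gt_of_continuousWithinAt {f g : ℝ → ℝ} {a : ℝ}
    (hf : ContinuousWithinAt f (Ici a) a) (hg : ContinuousWithinAt g (Ici a) a)
    (h : ∀ x > a, f x ≤ g x) : ∀ x ≥ a, f x ≤ g x := by
  intro x hx
  rcases hx.eq_or_lt with rfl | hx
  · have hIoi : 𝓝[>] a ≤ 𝓝[≥] a := nhdsWithin_mono _ Ioi_subset_Ici_self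
    exact le_of_tendsto_of_tendsto (hf.tendsto.mono_left hIoi) (hg.tendsto.mono_left hIoi)
      (eventually_nhdsWithin_of_forall h)
  · exact h x hx

theorem neg_inv_exp_one_le_mul_log {x : ℝ} (hx : 0 ≤ x) : -(exp 1)⁻¹ ≤ x * log x := by
  rcases hx.eq_or_lt with rfl | hx
  · simpa using (exp_pos 1).le
  have hlog : -log x ≤ (exp 1 * x)⁻¹ := by
    have := log_le_sub_one_of_pos (inv_pos.2 (mul_pos (exp_pos 1) hx))
    rw [log_inv, log_mul (exp_pos 1).ne' hx.ne', log_exp] at this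
    linarith
  have : x * (exp 1 * x)⁻¹ = (exp 1)⁻¹ := by field_simp
  nlinarith [mul_le_mul_of_nonneg_left hlog hx.le]

theorem hasDerivAt_const_mul_log {x : ℝ} (hx : x ≠ 0) (c : ℝ) :
    HasDerivAt (fun r => c * log r) (c / x) x := by
  simpa [div_eq_mul_inv] using (hasDerivAt_log hx).const_mul c

/-- At `r = 0` this is `1`, matching `r ln r = 0` there, because `log 0 = 0`. -/
noncomputable def entropyDensity (r : ℝ) : ℝ := r * log r - r + 1

@[simp]
theorem entropyDensity_one : entropyDensity 1 = 0 := by simp [entropyDensity]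

theorem continuous_entropyDensity : Continuous entropyDensity :=
  (continuous_mul_log.sub continuous_id).add continuous_const

theorem hasDerivAt_entropyDensity {x : ℝ} (hx : x ≠ 0) : HasDerivAt entropyDensity (log x) x := by
  unfold entropyDensity
  simpa using ((hasDerivAt_mul_log hx).sub (hasDerivAt_id x)).add_const 1

theorem mul_abs_log_le_entropyDensity_add {r : ℝ} (hr : 0 ≤ r) :
    r * |log r| ≤ entropyDensity r + r + (exp 1)⁻¹ := by
  have hmin := neg_inv_exp_one_le_mul_log hr
  have he : (exp 1)⁻¹ ≤ 1 := inv_le_one_of_one_le₀ (one_le_exp zero_le_one)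
  unfold entropyDensity
  rcases le_or_gt 0 (log r) with hlog | hlog
  · rw [abs_of_nonneg hlog]
    linarith [inv_nonneg.2 (exp_pos 1).le]
  · rw [abs_of_neg hlog]
    linarith

theorem mul_entropyDensity_le {φ : ℝ → ℝ} {c : ℝ}
    (hφdiff : ∀ r > (0:ℝ), DifferentiableAt ℝ φ r ∧ DifferentiableAt ℝ (deriv φ) r)
    (hφ'' : ∀ r > (0:ℝ), c / r ≤ deriv (deriv φ) r) (hφ1 : φ 1 = 0) (hφ'1 : deriv φ 1 = 0) :
    ∀ r > (0:ℝ), c * entropyDensity r ≤ φ r :=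
  le_of_hasDerivAt2_le_of_eq (convex_Ioi 0) isOpen_Ioi
    (fun x hx => (hφdiff x hx).1.hasDerivAt) (fun x hx => (hφdiff x hx).2.hasDerivAt)
    (fun x hx => (hasDerivAt_entropyDensity hx.ne').const_mul c)
    (fun x hx => hasDerivAt_const_mul_log hx.ne' c) hφ'' (a := 1) (mem_Ioi.2 one_pos)
    (by simp [hφ1]) (by simp [hφ'1])

theorem le_mul_entropyDensity {φ : ℝ → ℝ} {c : ℝ}
    (hφdiff : ∀ r > (0:ℝ), DifferentiableAt ℝ φ r ∧ DifferentiableAt ℝ (deriv φ) r)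
    (hφ'' : ∀ r > (0:ℝ), deriv (deriv φ) r ≤ c / r) (hφ1 : φ 1 = 0) (hφ'1 : deriv φ 1 = 0) :
    ∀ r > (0:ℝ), φ r ≤ c * entropyDensity r :=
  le_of_hasDerivAt2_le_of_eq (convex_Ioi 0) isOpen_Ioi
    (fun x hx => (hasDerivAt_entropyDensity hx.ne').const_mul c)
    (fun x hx => hasDerivAt_const_mul_log hx.ne' c)
    (fun x hx => (hφdiff x hx).1.hasDerivAt) (fun x hx => (hφdiff x hx).2.hasDerivAt) hφ''
    (a := 1) (mem_Ioi.2 one_pos)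
    (by simp [hφ1]) (by simp [hφ'1])

theorem phi_entropy_bounds_general
    (σ₀ σinf : ℝ) (hσ₀ : 0 < σ₀)
    (σ : ℝ → ℝ)
    (hσ' : ∀ r ≥ (0:ℝ), σ₀ ≤ -deriv σ r ∧ -deriv σ r ≤ σinf)
    (φ : ℝ → ℝ)
    (hφcont : ContinuousWithinAt φ (Ici 0) 0)
    (hφdiff : ∀ r > (0:ℝ), DifferentiableAt ℝ φ r ∧ DifferentiableAt ℝ (deriv φ) r)
    (hφ'' : ∀ r > (0:ℝ), deriv (deriv φ) r = -(deriv σ r) / r)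
    (hφ1 : φ 1 = 0) (hφ'1 : deriv φ 1 = 0) :
    ∀ r ≥ (0:ℝ),
      (σ₀ * (r * Real.log r - r + 1) ≤ φ r ∧
        φ r ≤ σinf * (r * Real.log r - r + 1)) ∧
      σ₀ * (r * |Real.log r|) ≤ φ r + σ₀ * r + σ₀ / Real.exp 1 := by
  have hcont (c : ℝ) : ContinuousWithinAt (fun r => c * entropyDensity r) (Ici 0) 0 :=
    (continuous_const.mul continuous_entropyDensity).continuousWithinAt
  have hlower : ∀ r ≥ (0:ℝ), σ₀ * entropyDensity r ≤ φ r :=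
    le_of_forall_gt_of_continuousWithinAt (hcont σ₀) hφcont <|
      mul_entropyDensity_le hφdiff (fun r hr => hφ'' r hr ▸
        div_le_div_of_nonneg_right (hσ' r hr.le).1 hr.le) hφ1 hφ'1
  have hupper : ∀ r ≥ (0:ℝ), φ r ≤ σinf * entropyDensity r :=
    le_of_forall_gt_of_continuousWithinAt hφcont (hcont σinf) <|
      le_mul_entropyDensity hφdiff (fun r hr => hφ'' r hr ▸
        div_le_div_of_nonneg_right (hσ' r hr.le).2 hr.le) hφ1 hφ'1
  intro r hr
  refine ⟨⟨hlower r hr, hupper r hr⟩, ?_⟩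
  calc σ₀ * (r * |log r|) ≤ σ₀ * (entropyDensity r + r + (exp 1)⁻¹) :=
        mul_le_mul_of_nonneg_left (mul_abs_log_le_entropyDensity_add hr) hσ₀.le
    _ = σ₀ * entropyDensity r + σ₀ * r + σ₀ / exp 1 := by ring
    _ ≤ φ r + σ₀ * r + σ₀ / exp 1 := by linarith [hlower r hr]

/-- Entropy bounds for the function `φ` defined by
`φ''(r) = −σ'(r)/r` (r>0), `φ(1) = φ'(1) = 0`, under `0 < σ₀ ≤ −σ' ≤ σ_∞`:
`σ₀ (r ln r − r + 1) ≤ φ(r) ≤ σ_∞ (r ln r − r + 1)` for all `r ≥ 0`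
(with `r ln r = 0` at `r = 0`, as is the Mathlib convention `Real.log 0 = 0`),
and consequently `σ₀ r |ln r| ≤ φ(r) + σ₀ r + σ₀/e`. -/
theorem phi_entropy_bounds
    (σ₀ σinf : ℝ) (hσ₀ : 0 < σ₀) (hσord : σ₀ ≤ σinf)
    (σ : ℝ → ℝ) (hσreg : ContDiffOn ℝ 3 σ (Ici 0))
    (hσ' : ∀ r ≥ (0:ℝ), σ₀ ≤ -deriv σ r ∧ -deriv σ r ≤ σinf)
    (φ : ℝ → ℝ)
    (hφcont : ContinuousWithinAt φ (Ici 0) 0)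
    (hφdiff : ∀ r > (0:ℝ), DifferentiableAt ℝ φ r ∧ DifferentiableAt ℝ (deriv φ) r)
    (hφ'' : ∀ r > (0:ℝ), deriv (deriv φ) r = -(deriv σ r) / r)
    (hφ1 : φ 1 = 0) (hφ'1 : deriv φ 1 = 0) :
    ∀ r ≥ (0:ℝ),
      (σ₀ * (r * Real.log r - r + 1) ≤ φ r ∧
        φ r ≤ σinf * (r * Real.log r - r + 1)) ∧
      σ₀ * (r * |Real.log r|) ≤ φ r + σ₀ * r + σ₀ / Real.exp 1 :=
  phi_entropy_bounds_general σ₀ σinf hσ₀ σ hσ' φ hφcont hφdiff hφ'' hφ1 hφ'1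
end

section
/- Let L > 0 and let h ∈ C([0,L]) be nonnegative with h^{5/2} ∈ C¹([0,L]). Then for all x, y ∈ [0,L]: |h(x) − h(y)| ≤ |x − y|^{1/5} ‖∂ₓ(h^{5/2})‖_{L₂(0,L)}^{2/5}. In particular, h is Hölder continuous of exponent 1/5 with Hölder seminorm at most ‖∂ₓ(h^{5/2})‖_{L₂(0,L)}^{2/5}. -/
/-!
Write `u = h^{5/2}`. By the fundamental theorem of calculus and Cauchy–Schwarz,
`(u x - u y)² ≤ |x - y| ∫₀ᴸ (u')²`. Since `t ↦ t^{2/5}` is `2/5`-Hölder on `[0, ∞)` with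
constant `1` (subadditivity of concave powers), `|h x - h y| = |u x^{2/5} - u y^{2/5}|
≤ |u x - u y|^{2/5}`, and the two bounds combine to the claim.
-/

open MeasureTheory Set

theorem Real.abs_rpow_sub_rpow_le {a b p : ℝ} (ha : 0 ≤ a) (hb : 0 ≤ b) (hp₀ : 0 ≤ p)
    (hp₁ : p ≤ 1) : |a ^ p - b ^ p| ≤ |a - b| ^ p := by
  wlog hba : b ≤ a generalizing a b
  · rw [abs_sub_comm, abs_sub_comm a]
    exact this hb ha (le_of_not_ge hba)
  have hsub : a ^ p ≤ (a - b) ^ p + b ^ p := by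
    simpa using Real.rpow_add_le_add_rpow (sub_nonneg.2 hba) hb hp₀ hp₁
  rw [abs_of_nonneg (sub_nonneg.2 (Real.rpow_le_rpow hb hba hp₀)),
    abs_of_nonneg (sub_nonneg.2 hba)]
  linarith

theorem sq_setIntegral_le_measureReal_mul_setIntegral_sq {α : Type*} [MeasurableSpace α]
    {μ : Measure α} {s : Set α} {f : α → ℝ} (hs : μ s ≠ ⊤) (hf : IntegrableOn f s μ)
    (hf2 : IntegrableOn (fun x => f x ^ 2) s μ) :
    (∫ x in s, f x ∂μ) ^ 2 ≤ μ.real s * ∫ x in s, f x ^ 2 ∂μ := by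
  rcases eq_or_ne (μ s) 0 with hs0 | hs0
  · simp [Measure.restrict_eq_zero.2 hs0]
  have jensen := (even_two.convexOn_pow (𝕜 := ℝ)).map_set_average_le
    (continuous_pow 2).continuousOn isClosed_univ hs0 hs (by simp) hf hf2
  have hpos : 0 < μ.real s := ENNReal.toReal_pos hs0 hs
  simp only [setAverage_eq, smul_eq_mul] at jensen
  field_simp at jensen
  exact jensen

theorem sq_sub_le_mul_integral_sq_deriv {u : ℝ → ℝ} {a b : ℝ} (hab : a ≤ b)
    (hu : ∀ x ∈ Icc a b, DifferentiableAt ℝ u x) (hu' : ContinuousOn (deriv u) (Icc a b)) :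
    (u b - u a) ^ 2 ≤ (b - a) * ∫ x in a..b, deriv u x ^ 2 := by
  have hftc : ∫ x in a..b, deriv u x = u b - u a :=
    intervalIntegral.integral_deriv_eq_sub (fun x hx => hu x (uIcc_of_le hab ▸ hx))
      ((uIcc_of_le hab).symm ▸ hu').intervalIntegrable
  have hint : ∀ {f : ℝ → ℝ}, ContinuousOn f (Icc a b) → IntegrableOn f (Ioc a b) :=
    fun hf => hf.integrableOn_Icc.mono_set Ioc_subset_Icc_self
  rw [← hftc, intervalIntegral.integral_of_le hab, intervalIntegral.integral_of_le hab,
    ← Real.volume_real_Ioc_of_le hab]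
  exact sq_setIntegral_le_measureReal_mul_setIntegral_sq measure_Ioc_lt_top.ne (hint hu')
    (hint (hu'.pow 2))

theorem sq_sub_le_abs_mul_integral_sq_deriv {u : ℝ → ℝ} {a b x y : ℝ}
    (hu : ∀ x ∈ Icc a b, DifferentiableAt ℝ u x) (hu' : ContinuousOn (deriv u) (Icc a b))
    (hx : x ∈ Icc a b) (hy : y ∈ Icc a b) :
    (u x - u y) ^ 2 ≤ |x - y| * ∫ z in a..b, deriv u z ^ 2 := by
  wlog hyx : y ≤ x generalizing x y
  · rw [← neg_sub, neg_sq, abs_sub_comm]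
    exact this hy hx (le_of_not_ge hyx)
  have hsub : Icc y x ⊆ Icc a b := Icc_subset_Icc hy.1 hx.2
  calc (u x - u y) ^ 2 ≤ (x - y) * ∫ z in y..x, deriv u z ^ 2 :=
        sq_sub_le_mul_integral_sq_deriv hyx (fun z hz => hu z (hsub hz)) (hu'.mono hsub)
    _ ≤ |x - y| * ∫ z in a..b, deriv u z ^ 2 := by
        rw [abs_of_nonneg (sub_nonneg.2 hyx)]
        gcongr
        exact intervalIntegral.integral_mono_interval hy.1 hyx hx.2
          (Filter.Eventually.of_forall fun z => sq_nonneg _)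
          ((hu'.pow 2).intervalIntegrable_of_Icc (hy.1.trans hy.2))

theorem abs_sub_le_rpow_of_sq_rpow_sub_le {a b p C : ℝ} (ha : 0 ≤ a) (hb : 0 ≤ b)
    (hp : 1 ≤ p) (h : (a ^ p - b ^ p) ^ 2 ≤ C) : |a - b| ≤ C ^ (1 / (2 * p)) := by
  have hp₀ : 0 < p := by linarith
  have hroot : ∀ {c : ℝ}, 0 ≤ c → (c ^ p) ^ p⁻¹ = c := fun hc => Real.rpow_rpow_inv hc hp₀.ne'
  calc |a - b| = |(a ^ p) ^ p⁻¹ - (b ^ p) ^ p⁻¹| := by rw [hroot ha, hroot hb]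
    _ ≤ |a ^ p - b ^ p| ^ p⁻¹ :=
        Real.abs_rpow_sub_rpow_le (by positivity) (by positivity) (by positivity)
          (inv_le_one_of_one_le₀ hp)
    _ = ((a ^ p - b ^ p) ^ 2) ^ (1 / (2 * p)) := by
        rw [← sq_abs, ← Real.rpow_natCast, ← Real.rpow_mul (abs_nonneg _)]
        congr 1
        push_cast
        field_simp
    _ ≤ C ^ (1 / (2 * p)) := by gcongr

/-- `(∫₀ᴸ (∂ₓ h^{5/2})²)^{1/5}` is `‖∂ₓ(h^{5/2})‖_{L₂(0,L)}^{2/5}`. -/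
theorem holder_bound_from_h52_general
    (L : ℝ) (h : ℝ → ℝ)
    (hnn : ∀ x ∈ Icc (0:ℝ) L, 0 ≤ h x)
    (hdiff : ∀ x ∈ Icc (0:ℝ) L, DifferentiableAt ℝ (fun y => h y ^ ((5:ℝ)/2)) x)
    (hderiv_cont : ContinuousOn (deriv (fun y => h y ^ ((5:ℝ)/2))) (Icc 0 L)) :
    ∀ x ∈ Icc (0:ℝ) L, ∀ y ∈ Icc (0:ℝ) L,
      |h x - h y| ≤ |x - y| ^ ((1:ℝ)/5) *
        (∫ z in (0:ℝ)..L, (deriv (fun y => h y ^ ((5:ℝ)/2)) z) ^ 2) ^ ((1:ℝ)/5) := by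
  intro x hx y hy
  have hI : 0 ≤ ∫ z in (0:ℝ)..L, (deriv (fun y => h y ^ ((5:ℝ)/2)) z) ^ 2 :=
    intervalIntegral.integral_nonneg (hx.1.trans hx.2) fun z _ => sq_nonneg _
  have hbound := abs_sub_le_rpow_of_sq_rpow_sub_le (hnn x hx) (hnn y hy)
    (by norm_num : (1:ℝ) ≤ 5 / 2) (sq_sub_le_abs_mul_integral_sq_deriv hdiff hderiv_cont hx hy)
  rwa [Real.mul_rpow (abs_nonneg _) hI, show (1:ℝ) / (2 * (5 / 2)) = 1 / 5 by norm_num] at hbound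

/-- If `h : [0,L] → ℝ` is continuous and nonnegative and `h^{5/2}` is `C¹`,
then `|h x - h y| ≤ |x-y|^{1/5} ‖∂ₓ(h^{5/2})‖_{L₂(0,L)}^{2/5}`; in particular `h` is
`1/5`-Hölder continuous with seminorm at most `‖∂ₓ(h^{5/2})‖_{L₂}^{2/5}`.
(Note that `(∫ (∂ₓ(h^{5/2}))²)^{1/5} = ‖∂ₓ(h^{5/2})‖₂^{2/5}`.) -/
theorem holder_bound_from_h52
    (L : ℝ) (hL : 0 < L) (h : ℝ → ℝ)
    (hcont : ContinuousOn h (Icc 0 L))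
    (hnn : ∀ x ∈ Icc (0:ℝ) L, 0 ≤ h x)
    (hdiff : ∀ x ∈ Icc (0:ℝ) L, DifferentiableAt ℝ (fun y => h y ^ ((5:ℝ)/2)) x)
    (hderiv_cont : ContinuousOn (deriv (fun y => h y ^ ((5:ℝ)/2))) (Icc 0 L)) :
    ∀ x ∈ Icc (0:ℝ) L, ∀ y ∈ Icc (0:ℝ) L,
      |h x - h y| ≤ |x - y| ^ ((1:ℝ)/5) *
        (∫ z in (0:ℝ)..L, (deriv (fun y => h y ^ ((5:ℝ)/2)) z) ^ 2) ^ ((1:ℝ)/5) :=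
  holder_bound_from_h52_general L h hnn hdiff hderiv_cont
end
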